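/- arXiv:2405.19197 — 7 statements merged into one kernel-verified Lean document; each statement's English description precedes it below -/
import Mathlib

section
/- Let p > q ≥ 2 be coprime integers, set G = (p−1)(q−1), and let D ∈ ℤ[X] be the unique polynomial with (X^p − 1)·(X^q − 1)·D = (X^{pq} − 1)·(X − 1). Then for every natural number j < p, the coefficient of X^{G−j} in D equals 1 if j ≡ 0 (mod q), equals −1 if j ≡ 1 (mod q), and equals 0 otherwise. -/
/-!
Cancelling `X^q - 1` against `X^{pq} - 1 = (X^q - 1) Φ` with `Φ = ∑_{i<p} X^{qi}` gives
`(X^p - 1) D = Φ (X - 1)`. Since `deg D = G < G - j + p`, comparing coefficients of `X^{G-j+p}`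
reads off `D_{G-j}` as `Φ_k - Φ_{k+1}` with `k = q(p-1) - j`, and `Φ_m` is `1` exactly when
`q ∣ m` (for `m < pq`); now `q ∣ k ↔ j ≡ 0` and `q ∣ k + 1 ↔ j ≡ 1 (mod q)`.
-/

open Polynomial Finset

theorem Nat.dvd_mul_sub_add_iff_mod_eq {q m j r : ℕ} (hj : j ≤ q * m) (hr : r < q) :
    q ∣ q * m - j + r ↔ j % q = r := by
  rw [← ZMod.natCast_eq_zero_iff, Nat.cast_add, Nat.cast_sub hj, Nat.cast_mul,
    ZMod.natCast_self, zero_mul, zero_sub, neg_add_eq_zero, ZMod.natCast_eq_natCast_iff',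
    Nat.mod_eq_of_lt hr, eq_comm]

namespace Polynomial

theorem coeff_sum_range_X_pow_mul {R : Type*} [Semiring R] {q : ℕ} (hq : 0 < q) (p m : ℕ) :
    (∑ i ∈ range p, (X : R[X]) ^ (q * i)).coeff m = if q ∣ m ∧ m < q * p then 1 else 0 := by
  simp_rw [finsetSum_coeff, coeff_X_pow]
  by_cases hm : q ∣ m
  · obtain ⟨c, rfl⟩ := hm
    simp only [Nat.mul_left_cancel_iff hq, sum_ite_eq, mem_range, dvd_mul_right,
      Nat.mul_lt_mul_left hq, true_and]
  · refine (Finset.sum_eq_zero fun i _ => if_neg ?_).trans (if_neg (by tauto)).symm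
    rintro rfl
    exact hm (dvd_mul_right q i)

section Ring

variable {R : Type*} [Ring R]

theorem coeff_X_pow_sub_one_mul_add {f : R[X]} {p n : ℕ} (hf : f.natDegree < n + p) :
    ((X ^ p - 1) * f).coeff (n + p) = f.coeff n := by
  rw [sub_mul, one_mul, coeff_sub, coeff_X_pow_mul, coeff_eq_zero_of_natDegree_lt hf, sub_zero]

theorem X_pow_mul_sub_one_eq (p q : ℕ) :
    (X : R[X]) ^ (p * q) - 1 = (X ^ q - 1) * ∑ i ∈ range p, X ^ (q * i) := by
  simp_rw [mul_comm p q, pow_mul]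
  exact (mul_geom_sum _ _).symm

end Ring

section TorusKnot

variable {R : Type*} [CommRing R] [IsDomain R] {p q : ℕ} {D : R[X]}

theorem X_pow_sub_one_mul_eq_of_torusKnot
    (hD : (X ^ p - 1) * (X ^ q - 1) * D = (X ^ (p * q) - 1) * (X - 1)) (hq : q ≠ 0) :
    (X ^ p - 1) * D = (∑ i ∈ range p, X ^ (q * i)) * (X - 1) := by
  refine mul_left_cancel₀ (X_pow_sub_C_ne_zero (Nat.pos_of_ne_zero hq) 1) ?_
  rw [C_1, ← mul_assoc, mul_comm (X ^ q - 1), hD, X_pow_mul_sub_one_eq, mul_assoc]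

theorem natDegree_of_torusKnot
    (hD : (X ^ p - 1) * (X ^ q - 1) * D = (X ^ (p * q) - 1) * (X - 1)) (hp : p ≠ 0)
    (hq : q ≠ 0) : p + q + D.natDegree = p * q + 1 := by
  have hX (n : ℕ) (hn : n ≠ 0) : (X ^ n - 1 : R[X]) ≠ 0 := by
    simpa using X_pow_sub_C_ne_zero (Nat.pos_of_ne_zero hn) (1 : R)
  have hdeg (n : ℕ) : (X ^ n - 1 : R[X]).natDegree = n := by
    simpa using natDegree_X_pow_sub_C (n := n) (r := (1 : R))
  have hX1 : (X - 1 : R[X]) = X ^ 1 - 1 := by rw [pow_one]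
  rw [hX1] at hD
  have hD0 : D ≠ 0 := by
    rintro rfl
    exact mul_ne_zero (hX _ (mul_ne_zero hp hq)) (hX 1 one_ne_zero) (hD.symm.trans (mul_zero _))
  have := congrArg natDegree hD
  rwa [natDegree_mul (mul_ne_zero (hX p hp) (hX q hq)) hD0, natDegree_mul (hX p hp) (hX q hq),
    natDegree_mul (hX _ (mul_ne_zero hp hq)) (hX 1 one_ne_zero), hdeg, hdeg, hdeg, hdeg] at this

end TorusKnot

end Polynomial

theorem stmt_1_general (p q : ℕ) (hq : 2 ≤ q) (hqp : q < p)
    (D : Polynomial ℤ)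
    (hD : (X ^ p - 1) * (X ^ q - 1) * D = (X ^ (p * q) - 1) * (X - 1))
    (j : ℕ) (hj : j < p) :
    D.coeff ((p - 1) * (q - 1) - j) =
      if j % q = 0 then 1 else if j % q = 1 then -1 else 0 := by
  have hdeg := natDegree_of_torusKnot hD (by omega) (by omega)
  have hG : (p - 1) * (q - 1) + p = q * (p - 1) + 1 := by
    zify [show 1 ≤ p by omega, show 1 ≤ q by omega]
    ring
  have hmul : q * (p - 1) + q = q * p := by
    zify [show 1 ≤ p by omega]
    ring
  rw [mul_comm p q] at hdeg
  have hjG : j ≤ (p - 1) * (q - 1) := le_trans (by omega) (Nat.le_mul_of_pos_right _ (by omega))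
  set k := q * (p - 1) - j
  have hcoeff : D.coeff ((p - 1) * (q - 1) - j) =
      (∑ i ∈ range p, (X : ℤ[X]) ^ (q * i)).coeff k -
        (∑ i ∈ range p, (X : ℤ[X]) ^ (q * i)).coeff (k + 1) := by
    rw [← coeff_X_pow_sub_one_mul_add (p := p) (show D.natDegree < _ by omega),
      X_pow_sub_one_mul_eq_of_torusKnot hD (by omega),
      show (p - 1) * (q - 1) - j + p = k + 1 by omega, ← C_1, coeff_mul_X_sub_C, mul_one]
  have hk0 : q ∣ k ↔ j % q = 0 := by
    simpa using Nat.dvd_mul_sub_add_iff_mod_eq (r := 0) (by omega : j ≤ q * (p - 1)) (by omega)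
  have hk1 : q ∣ k + 1 ↔ j % q = 1 := Nat.dvd_mul_sub_add_iff_mod_eq (by omega) (by omega)
  rw [hcoeff, coeff_sum_range_X_pow_mul (by omega), coeff_sum_range_X_pow_mul (by omega)]
  simp only [hk0, hk1, show k < q * p by omega, show k + 1 < q * p by omega, and_true]
  split_ifs <;> omega

/-- Leading-terms formula for the normalized Alexander polynomial of a torus knot:
for `j < p`, the coefficient of `X^{G−j}` in `D` (where `G = (p−1)(q−1)`) is `1` if
`j ≡ 0 (mod q)`, `−1` if `j ≡ 1 (mod q)`, and `0` otherwise. -/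
theorem stmt_1 (p q : ℕ) (hq : 2 ≤ q) (hqp : q < p) (hcop : Nat.Coprime p q)
    (D : Polynomial ℤ)
    (hD : (X ^ p - 1) * (X ^ q - 1) * D = (X ^ (p * q) - 1) * (X - 1))
    (j : ℕ) (hj : j < p) :
    D.coeff ((p - 1) * (q - 1) - j) =
      if j % q = 0 then 1 else if j % q = 1 then -1 else 0 :=
  stmt_1_general p q hq hqp D hD j hj
end

section
/- Let a > b ≥ 2 be coprime integers, set G = (a−1)(b−1), and let D ∈ ℤ[X] be the unique polynomial with (X^a − 1)·(X^b − 1)·D = (X^{ab} − 1)·(X − 1). Let Q ∈ ℤ[X] be monic of degree n ≥ 1 with coefficient of X^{n−1} equal to −1, and let w be a natural number with 1 ≤ w < a and w ≡ 1 (mod b). Then the coefficient of X^{G + n·w − w} in D·Q(X^w) equals −2. -/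
open Polynomial

private lemma aux_D_monic (a b : ℕ) (hb : 2 ≤ b) (hba : b < a)
    (D : Polynomial ℤ)
    (hD : (X ^ a - 1) * (X ^ b - 1) * D = (X ^ (a * b) - 1) * (X - 1)) :
    D.Monic ∧ D.natDegree = (a - 1) * (b - 1) := by
  have ha0 : a ≠ 0 := by omega
  have hb0 : b ≠ 0 := by omega
  have hab0 : a * b ≠ 0 := by positivity
  have hMa : (X ^ a - 1 : Polynomial ℤ).Monic := by
    simpa using monic_X_pow_sub_C (1 : ℤ) ha0
  have hMb : (X ^ b - 1 : Polynomial ℤ).Monic := by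
    simpa using monic_X_pow_sub_C (1 : ℤ) hb0
  have hMab : (X ^ (a * b) - 1 : Polynomial ℤ).Monic := by
    simpa using monic_X_pow_sub_C (1 : ℤ) hab0
  have hMx : (X - 1 : Polynomial ℤ).Monic := by
    simpa using monic_X_sub_C (1 : ℤ)
  have hDne : D ≠ 0 := by
    intro h
    apply (hMab.mul hMx).ne_zero
    rw [← hD, h, mul_zero]
  have hda : (X ^ a - 1 : Polynomial ℤ).natDegree = a := by
    simpa using natDegree_X_pow_sub_C (n := a) (r := (1:ℤ))
  have hdb : (X ^ b - 1 : Polynomial ℤ).natDegree = b := by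
    simpa using natDegree_X_pow_sub_C (n := b) (r := (1:ℤ))
  have hdab : (X ^ (a*b) - 1 : Polynomial ℤ).natDegree = a * b := by
    simpa using natDegree_X_pow_sub_C (n := a*b) (r := (1:ℤ))
  have hdx : (X - 1 : Polynomial ℤ).natDegree = 1 := by
    simpa using natDegree_X_sub_C (1:ℤ)
  have hdeg : a + b + D.natDegree = a * b + 1 := by
    have h1 := congrArg natDegree hD
    rw [natDegree_mul (mul_ne_zero hMa.ne_zero hMb.ne_zero) hDne,
        natDegree_mul hMa.ne_zero hMb.ne_zero,
        natDegree_mul hMab.ne_zero hMx.ne_zero, hda, hdb, hdab, hdx] at h1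
    omega
  have hmul1 : (a-1)*(b-1) + (b-1) = a*(b-1) := by
    rw [← Nat.succ_mul]; congr 1; omega
  have hmul2 : a*(b-1) + a = a*b := by
    rw [← Nat.mul_succ]; congr 1; omega
  constructor
  · have h2 := congrArg leadingCoeff hD
    rw [leadingCoeff_mul, leadingCoeff_mul, leadingCoeff_mul, hMa.leadingCoeff,
        hMb.leadingCoeff, hMab.leadingCoeff, hMx.leadingCoeff] at h2
    unfold Monic
    simp at h2
    simpa using h2
  · omega


private lemma aux_D_coeff (a b : ℕ) (hb : 2 ≤ b) (hba : b < a) (hcop : Nat.Coprime a b)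
    (D : Polynomial ℤ)
    (hD : (X ^ a - 1) * (X ^ b - 1) * D = (X ^ (a * b) - 1) * (X - 1))
    (hDdeg : D.natDegree = (a - 1) * (b - 1))
    (w : ℕ) (hw1 : 1 ≤ w) (hwa : w < a) (hwb : w % b = 1) :
    D.coeff ((a - 1) * (b - 1) - w) = -1 := by
  have ha0 : a ≠ 0 := by omega
  have hMa : (X ^ a - 1 : Polynomial ℤ).Monic := by
    simpa using monic_X_pow_sub_C (1 : ℤ) ha0
  set P : Polynomial ℤ := ∑ i ∈ Finset.range b, (X ^ a) ^ i with hPdef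
  have hgeom : P * (X ^ a - 1) = X ^ (a * b) - 1 := by
    rw [hPdef, geom_sum_mul, ← pow_mul, mul_comm a b]
  have hPD : (X ^ b - 1) * D = (X - 1) * P := by
    apply mul_left_cancel₀ hMa.ne_zero
    linear_combination hD - (X - 1 : Polynomial ℤ) * hgeom
  -- basic arithmetic facts
  obtain ⟨t, hw⟩ : ∃ t, w = t * b + 1 := by
    refine ⟨w / b, ?_⟩
    have h := Nat.div_add_mod w b
    rw [Nat.mul_comm] at h
    omega
  set s := t + 1 with hs
  have hmul1 : (a-1)*(b-1) + (b-1) = a*(b-1) := by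
    rw [← Nat.succ_mul]; congr 1; omega
  have hmul2 : a*(b-1) + a = a*b := by
    rw [← Nat.mul_succ]; congr 1; omega
  have hmul3 : a*(b-2) + a + a = a*b := by
    rw [(by omega : a*(b-2) + a + a = a*(b-2) + a*2), ← Nat.mul_add]
    congr 1; omega
  have hmul4 : b - 2 ≤ a*(b-2) := Nat.le_mul_of_pos_left _ (by omega)
  have hsb : s * b = t * b + b := by rw [hs, Nat.succ_mul]
  have hsba : s * b ≤ a * (b-1) := by omega
  -- coefficient of P
  have hPcoeff : ∀ m : ℕ, (∀ i, i < b → m ≠ a * i) → P.coeff m = 0 := by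
    intro m hm
    rw [hPdef, finset_sum_coeff]
    apply Finset.sum_eq_zero
    intro i hi
    rw [← pow_mul, coeff_X_pow, if_neg (hm i (Finset.mem_range.mp hi))]
  have hPtop : P.coeff (a * (b-1)) = 1 := by
    rw [hPdef, finset_sum_coeff]
    rw [Finset.sum_eq_single (b-1)]
    · rw [← pow_mul, coeff_X_pow, if_pos rfl]
    · intro i hi hne
      rw [← pow_mul, coeff_X_pow, if_neg]
      intro h
      exact hne (Nat.eq_of_mul_eq_mul_left (by omega) h.symm)
    · intro h
      exact absurd (Finset.mem_range.mpr (by omega)) h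
  -- the induction
  have main : ∀ k, k ≤ s → D.coeff (a*(b-1) - k*b) = if k = 0 then 0 else -1 := by
    intro k
    induction k with
    | zero =>
      intro _
      rw [if_pos rfl, Nat.zero_mul, Nat.sub_zero]
      apply coeff_eq_zero_of_natDegree_lt
      rw [hDdeg]; omega
    | succ k ih =>
      intro hk1
      have ihv := ih (by omega)
      set m' := a*(b-1) - k*b with hm'
      have hkb : (k+1)*b ≤ s*b := Nat.mul_le_mul_right _ hk1
      have hkb' : (k+1)*b = k*b + b := Nat.succ_mul _ _
      have hbm' : b ≤ m' := by omega
      have e1 : ((X^b-1 : Polynomial ℤ)*D).coeff m' = D.coeff (m'-b) - D.coeff m' := by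
        rw [sub_mul, one_mul, coeff_sub]
        congr 1
        conv_lhs => rw [show m' = (m' - b) + b from (by omega)]
        rw [coeff_X_pow_mul]
      have e2 : ((X-1 : Polynomial ℤ)*P).coeff m' = P.coeff (m'-1) - P.coeff m' := by
        rw [sub_mul, one_mul, coeff_sub]
        congr 1
        conv_lhs => rw [show m' = (m' - 1) + 1 from (by omega)]
        rw [← pow_one (X : Polynomial ℤ), coeff_X_pow_mul]
      have hPm1 : P.coeff (m' - 1) = 0 := by
        apply hPcoeff
        intro i hi heq
        have hsplit : a*i + a*((b-1)-i) = a*(b-1) := by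
          rw [← Nat.mul_add]; congr 1; omega
        rcases Nat.eq_zero_or_pos ((b-1)-i) with h0 | hpos
        · rw [h0, Nat.mul_zero] at hsplit; omega
        · have := Nat.le_mul_of_pos_right a hpos; omega
      have hPm : P.coeff m' = if k = 0 then 1 else 0 := by
        rcases Nat.eq_zero_or_pos k with hk0 | hkpos
        · rw [if_pos hk0, hm', hk0, Nat.zero_mul, Nat.sub_zero, hPtop]
        · rw [if_neg (by omega)]
          apply hPcoeff
          intro i hi heq
          have hsplit : a*i + a*((b-1)-i) = a*(b-1) := by
            rw [← Nat.mul_add]; congr 1; omega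
          have hbk : b ≤ k * b := Nat.le_mul_of_pos_left _ hkpos
          rcases Nat.eq_zero_or_pos ((b-1)-i) with h0 | hpos
          · rw [h0, Nat.mul_zero] at hsplit; omega
          · have := Nat.le_mul_of_pos_right a hpos; omega
      have hstep := congrArg (fun p => p.coeff m') hPD
      simp only [e1, e2, hPm1, hPm] at hstep
      have hidx : m' - b = a*(b-1) - (k+1)*b := by omega
      rw [hidx] at hstep
      rw [if_neg (by omega)]
      rcases Nat.eq_zero_or_pos k with hk0 | hkpos
      · rw [if_pos hk0] at ihv hstep
        rw [hk0] at hstep ⊢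
        omega
      · rw [if_neg (by omega)] at ihv hstep
        omega
  have hfin := main s le_rfl
  rw [if_neg (by omega)] at hfin
  have hidx2 : (a-1)*(b-1) - w = a*(b-1) - s*b := by omega
  rw [hidx2]
  exact hfin


/-- If `w ≡ 1 (mod b)` with `1 ≤ w < a`, then the coefficient of `X^{G + n·w − w}` in
`D·Q(X^w)` equals `−2`, where `D` is the normalized Alexander polynomial of `T_{a,b}`
and `Q` is monic of degree `n ≥ 1` with subleading coefficient `−1`. -/
theorem stmt_5 (a b : ℕ) (hb : 2 ≤ b) (hba : b < a) (hcop : Nat.Coprime a b)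
    (D : Polynomial ℤ)
    (hD : (X ^ a - 1) * (X ^ b - 1) * D = (X ^ (a * b) - 1) * (X - 1))
    (Q : Polynomial ℤ) (n : ℕ) (hn : 1 ≤ n)
    (hQmon : Q.Monic) (hQdeg : Q.natDegree = n) (hQ : Q.coeff (n - 1) = -1)
    (w : ℕ) (hw1 : 1 ≤ w) (hwa : w < a) (hwb : w % b = 1) :
    (D * Q.comp (X ^ w)).coeff ((a - 1) * (b - 1) + n * w - w) = -2 := by
  obtain ⟨hDmon, hDdeg⟩ := aux_D_monic a b hb hba D hD
  have hDGw := aux_D_coeff a b hb hba hcop D hD hDdeg w hw1 hwa hwb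
  set G := (a - 1) * (b - 1) with hG
  have hwG : w ≤ G := by
    have : (a-1) * 1 ≤ (a-1)*(b-1) := Nat.mul_le_mul_left _ (by omega)
    omega
  have hDG : D.coeff G = 1 := by rw [← hDdeg]; exact hDmon.coeff_natDegree
  -- multiplication facts
  have hmw1 : (n-1)*w + w = n*w := by
    rw [← Nat.succ_mul]; congr 1; omega
  have hN : G + n*w - w = G + (n-1)*w := by omega
  -- R
  set R : Polynomial ℤ := Q - X^n + X^(n-1) with hRdef
  have hQsplit : Q = X^n - X^(n-1) + R := by rw [hRdef]; ring
  have hRcoeff : ∀ m, n - 1 ≤ m → R.coeff m = 0 := by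
    intro m hm
    rw [hRdef, coeff_add, coeff_sub, coeff_X_pow, coeff_X_pow]
    rcases (by omega : m = n - 1 ∨ m = n ∨ n < m) with h | h | h
    · rw [h, if_neg (by omega), if_pos rfl, hQ]; ring
    · have hQn : Q.coeff n = 1 := by rw [← hQdeg]; exact hQmon.coeff_natDegree
      rw [h, if_pos rfl, if_neg (by omega), hQn]; ring
    · rw [if_neg (by omega), if_neg (by omega),
        coeff_eq_zero_of_natDegree_lt (by rw [hQdeg]; omega)]
      ring
  -- the three terms
  have hcomp : Q.comp (X^w) = X^(n*w) - X^((n-1)*w) + R.comp (X^w) := by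
    conv_lhs => rw [hQsplit]
    rw [add_comp, sub_comp, pow_comp, pow_comp, X_comp, ← pow_mul, ← pow_mul,
      mul_comm w n, mul_comm w (n-1)]
  have hterm3 : (D * R.comp (X^w)).coeff (G + (n-1)*w) = 0 := by
    rcases (by omega : n = 1 ∨ 2 ≤ n) with h1 | h2
    · have hR0 : R = 0 := by
        ext m
        rw [coeff_zero]
        exact hRcoeff m (by omega)
      rw [hR0, zero_comp, mul_zero, coeff_zero]
    · apply coeff_eq_zero_of_natDegree_lt
      have hRd : R.natDegree ≤ n - 2 :=
        natDegree_le_iff_coeff_eq_zero.mpr (fun m hm => hRcoeff m (by omega))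
      have h1 : (R.comp (X^w)).natDegree ≤ (n-2) * w := by
        refine le_trans natDegree_comp_le ?_
        rw [natDegree_X_pow]
        exact Nat.mul_le_mul_right _ hRd
      have h2 : (D * R.comp (X^w)).natDegree ≤ G + (n-2)*w :=
        le_trans natDegree_mul_le (by rw [hDdeg]; exact Nat.add_le_add_left h1 _)
      have h3 : (n-2)*w < (n-1)*w := (Nat.mul_lt_mul_right (show 0 < w by omega)).mpr (by omega)
      omega
  have hterm1 : (D * X^(n*w)).coeff (G + (n-1)*w) = -1 := by
    rw [coeff_mul_X_pow', if_pos (by omega), show G + (n-1)*w - n*w = G - w by omega]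
    exact hDGw
  have hterm2 : (D * X^((n-1)*w)).coeff (G + (n-1)*w) = 1 := by
    rw [coeff_mul_X_pow', if_pos (by omega), Nat.add_sub_cancel]
    exact hDG
  rw [hN, hcomp, mul_add, mul_sub, coeff_add, coeff_sub, hterm1, hterm2, hterm3]
  norm_num
end

section
/- Let a > b ≥ 3 be coprime integers, set G = (a−1)(b−1), and let D ∈ ℤ[X] be the unique polynomial with (X^a − 1)·(X^b − 1)·D = (X^{ab} − 1)·(X − 1). Let Q ∈ ℤ[X] be monic of degree n ≥ 1 with coefficient of X^{n−1} equal to −1. Let w be a natural number with 1 ≤ w < a, write w = m·b + r with 0 ≤ r < b, and suppose r ≥ 2. Set P = D·Q(X^w). Then the coefficient of X^{G + n·w − m·b − 1} in P equals −1, the coefficient of X^{G + n·w − w} in P equals −1, and the coefficient of X^e in P equals 0 for every e with G + n·w − w < e < G + n·w − m·b − 1. In particular, P has two nonzero coefficients of the same sign separated only by zero coefficients. -/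
open Polynomial


lemma ndXp (n : ℕ) : ((X:Polynomial ℤ)^n - 1).natDegree = n := by
  simpa using natDegree_X_pow_sub_C (n := n) (r := (1:ℤ))

lemma ndX1 : ((X:Polynomial ℤ) - 1).natDegree = 1 := by
  simpa using ndXp 1

lemma degD (a b : ℕ) (hb : 3 ≤ b) (hba : b < a)
    (D : Polynomial ℤ)
    (hD : (X ^ a - 1) * (X ^ b - 1) * D = (X ^ (a * b) - 1) * (X - 1)) :
    D.natDegree = (a - 1) * (b - 1) := by
  have ha0 : a ≠ 0 := by omega
  have hb0 : b ≠ 0 := by omega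
  have hab0 : a * b ≠ 0 := by positivity
  have hMa : ((X : Polynomial ℤ) ^ a - 1).Monic := by
    simpa using monic_X_pow_sub_C (1 : ℤ) ha0
  have hMb : ((X : Polynomial ℤ) ^ b - 1).Monic := by
    simpa using monic_X_pow_sub_C (1 : ℤ) hb0
  have hMab : ((X : Polynomial ℤ) ^ (a*b) - 1).Monic := by
    simpa using monic_X_pow_sub_C (1 : ℤ) hab0
  have hMX : ((X : Polynomial ℤ) - 1).Monic := by
    simpa using monic_X_pow_sub_C (1 : ℤ) one_ne_zero
  have hDne : D ≠ 0 := by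
    intro h
    apply_fun natDegree at hD
    rw [h, mul_zero] at hD
    rw [hMab.natDegree_mul hMX, ndXp, ndX1, natDegree_zero] at hD
    omega
  have h1 : ((X ^ a - 1) * (X ^ b - 1) * D : Polynomial ℤ).natDegree
      = a + b + D.natDegree := by
    rw [natDegree_mul ((hMa.mul hMb).ne_zero) hDne, hMa.natDegree_mul hMb, ndXp, ndXp]
  have h2 : (((X:Polynomial ℤ) ^ (a*b) - 1) * (X - 1)).natDegree = a*b + 1 := by
    rw [hMab.natDegree_mul hMX, ndXp, ndX1]
  rw [hD, h2] at h1
  obtain ⟨a', rfl⟩ : ∃ a', a = a' + 1 := ⟨a - 1, by omega⟩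
  obtain ⟨b', rfl⟩ : ∃ b', b = b' + 1 := ⟨b - 1, by omega⟩
  have : (a'+1) * (b'+1) = a'*b' + a' + b' + 1 := by ring
  simp only [Nat.add_sub_cancel]
  omega



lemma coeffD (a b : ℕ) (hb : 3 ≤ b) (hba : b < a)
    (D : Polynomial ℤ) (hdeg : D.natDegree = (a - 1) * (b - 1))
    (hD : (X ^ a - 1) * (X ^ b - 1) * D = (X ^ (a * b) - 1) * (X - 1)) :
    ∀ k, k < a → D.coeff ((a-1)*(b-1) - k)
      = if k % b = 0 then 1 else if k % b = 1 then -1 else 0 := by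
  set G := (a-1)*(b-1) with hGdef
  have hGab : G + a + b = a * b + 1 := by
    obtain ⟨a', rfl⟩ : ∃ a', a = a' + 1 := ⟨a - 1, by omega⟩
    obtain ⟨b', rfl⟩ : ∃ b', b = b' + 1 := ⟨b - 1, by omega⟩
    have : (a'+1) * (b'+1) = a'*b' + a' + b' + 1 := by ring
    simp only [hGdef, Nat.add_sub_cancel]
    omega
  have haG : a ≤ G := by
    have h1 : (a-1)*2 ≤ (a-1)*(b-1) := Nat.mul_le_mul_left _ (by omega)
    omega
  have hhigh : ∀ j, G < j → D.coeff j = 0 := fun j hj =>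
    coeff_eq_zero_of_natDegree_lt (by omega)
  have hD2 : ∀ t : ℕ, (D * X^(a+b)).coeff t - (D * X^a).coeff t - (D * X^b).coeff t
      + D.coeff t
      = ((X:Polynomial ℤ)^(a*b+1)).coeff t - ((X:Polynomial ℤ)^(a*b)).coeff t
        - ((X:Polynomial ℤ)^1).coeff t + ((1:Polynomial ℤ)).coeff t := by
    intro t
    have h : D * X^(a+b) - D * X^a - D * X^b + D
        = (X:Polynomial ℤ)^(a*b+1) - X^(a*b) - X^1 + 1 := by
      calc D * X^(a+b) - D * X^a - D * X^b + D = (X^a - 1) * (X^b-1) * D := by ring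
      _ = ((X:Polynomial ℤ)^(a*b) - 1) * (X - 1) := hD
      _ = (X:Polynomial ℤ)^(a*b+1) - X^(a*b) - X^1 + 1 := by ring
    have := congrArg (fun p => p.coeff t) h
    simpa [coeff_sub, coeff_add] using this
  have main : ∀ k, k < a → D.coeff (G - k) - D.coeff (G + b - k) - D.coeff (G + a - k)
      + D.coeff (G + a + b - k) = (if k = 0 then 1 else 0) - (if k = 1 then 1 else 0) := by
    intro k hk
    have ht := hD2 (G + a + b - k)
    rw [coeff_mul_X_pow', coeff_mul_X_pow', coeff_mul_X_pow',
      coeff_X_pow, coeff_X_pow, coeff_X_pow, coeff_one] at ht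
    rw [if_pos (show a + b ≤ G + a + b - k by omega),
      if_pos (show a ≤ G + a + b - k by omega),
      if_pos (show b ≤ G + a + b - k by omega),
      show G + a + b - k - (a+b) = G - k from by omega,
      show G + a + b - k - a = G + b - k from by omega,
      show G + a + b - k - b = G + a - k from by omega,
      if_neg (show ¬(G + a + b - k = 1) by omega),
      if_neg (show ¬(G + a + b - k = 0) by omega)] at ht
    have e5 : (G + a + b - k = a*b+1) ↔ k = 0 := by omega
    have e6 : (G + a + b - k = a*b) ↔ k = 1 := by omega
    simp only [e5, e6] at ht
    simpa using ht
  intro k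
  induction k using Nat.strong_induction_on with
  | _ k IH =>
    intro hk
    have hm := main k hk
    rw [hhigh (G + a - k) (by omega), hhigh (G + a + b - k) (by omega)] at hm
    by_cases hkb : b ≤ k
    · rw [show G + b - k = G - (k - b) from by omega] at hm
      have hIH := IH (k - b) (by omega) (by omega)
      have hmod : k % b = (k - b) % b := by
        conv_lhs => rw [show k = b * 1 + (k - b) from by omega]
        rw [Nat.mul_add_mod]
      rw [if_neg (by omega : ¬ k = 0), if_neg (by omega : ¬ k = 1)] at hm
      have : D.coeff (G - k) = D.coeff (G - (k - b)) := by linarith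
      rw [this, hIH, hmod]
    · have h1 : k % b = k := Nat.mod_eq_of_lt (by omega)
      rw [hhigh (G + b - k) (by omega)] at hm
      rw [h1]
      split_ifs at hm ⊢ <;> linarith

/-- Same-sign consecutive nonzero coefficients in `D·Q(X^w)` when `w = m·b + r` with
`2 ≤ r < b`: the coefficients of `X^{G + n·w − m·b − 1}` and `X^{G + n·w − w}` are both
`−1`, and all coefficients strictly between these degrees vanish. -/
theorem stmt_6 (a b : ℕ) (hb : 3 ≤ b) (hba : b < a) (hcop : Nat.Coprime a b)
    (D : Polynomial ℤ)
    (hD : (X ^ a - 1) * (X ^ b - 1) * D = (X ^ (a * b) - 1) * (X - 1))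
    (Q : Polynomial ℤ) (n : ℕ) (hn : 1 ≤ n)
    (hQmon : Q.Monic) (hQdeg : Q.natDegree = n) (hQ : Q.coeff (n - 1) = -1)
    (w m r : ℕ) (hw1 : 1 ≤ w) (hwa : w < a)
    (hwmr : w = m * b + r) (hr2 : 2 ≤ r) (hrb : r < b) :
    (D * Q.comp (X ^ w)).coeff ((a - 1) * (b - 1) + n * w - m * b - 1) = -1 ∧
    (D * Q.comp (X ^ w)).coeff ((a - 1) * (b - 1) + n * w - w) = -1 ∧
    ∀ e : ℕ, (a - 1) * (b - 1) + n * w - w < e →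
      e < (a - 1) * (b - 1) + n * w - m * b - 1 →
      (D * Q.comp (X ^ w)).coeff e = 0 := by
  have hdeg := degD a b hb hba D hD
  have key := coeffD a b hb hba D hdeg hD
  set G := (a-1)*(b-1) with hGdef
  have haG : a ≤ G := by
    have h1 : (a-1)*2 ≤ (a-1)*(b-1) := Nat.mul_le_mul_left _ (by omega)
    omega
  have hhigh : ∀ j, G < j → D.coeff j = 0 := fun j hj =>
    coeff_eq_zero_of_natDegree_lt (by omega)
  set R : Polynomial ℤ := Q - X^n + X^(n-1) with hRdef
  -- coefficients of R vanish above n-2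
  have hRcoeff : ∀ j, n - 2 < j → R.coeff j = 0 := by
    intro j hj
    have hj' : j > n ∨ j = n ∨ (j = n - 1 ∧ 2 ≤ n) := by omega
    simp only [hRdef, coeff_add, coeff_sub, coeff_X_pow]
    have hQn : Q.coeff n = 1 := by
      have := hQmon.coeff_natDegree
      rwa [hQdeg] at this
    rcases hj' with h | h | ⟨h, h2⟩
    · rw [coeff_eq_zero_of_natDegree_lt (by omega)]
      rw [if_neg (by omega), if_neg (by omega)]
      ring
    · rw [h, hQn, if_pos rfl, if_neg (by omega)]
      ring
    · rw [h, hQ, if_neg (by omega), if_pos rfl]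
      ring
  have hRdeg : R.natDegree ≤ n - 2 := natDegree_le_iff_coeff_eq_zero.2 hRcoeff
  have hR0 : n = 1 → R = 0 := by
    intro h1
    subst h1
    ext j
    rcases Nat.eq_zero_or_pos j with hj | hj
    · subst hj
      simp [hRdef, hQ]
    · simpa using hRcoeff j (by omega)
  -- decomposition of Q.comp (X^w)
  have hcomp : Q.comp (X^w) = X^(n*w) - X^((n-1)*w) + R.comp (X^w) := by
    have hQeq : Q = X^n - X^(n-1) + R := by rw [hRdef]; ring
    rw [hQeq, add_comp, sub_comp, X_pow_comp, X_pow_comp, ← pow_mul, ← pow_mul,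
      mul_comm w n, mul_comm w (n-1)]
  have hw2 : 2 ≤ w := by omega
  -- the R part contributes nothing in the relevant range
  have hRD : ∀ e, G + n*w - w ≤ e → (R.comp (X^w) * D).coeff e = 0 := by
    intro e he
    by_cases h1 : n = 1
    · rw [hR0 h1]; simp
    · apply coeff_eq_zero_of_natDegree_lt
      have hb1 : (R.comp (X^w)).natDegree ≤ (n-2)*w := by
        refine le_trans natDegree_comp_le ?_
        rw [natDegree_X_pow]
        exact Nat.mul_le_mul_right _ hRdeg
      have hb2 : (R.comp (X^w) * D).natDegree ≤ (n-2)*w + G :=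
        le_trans natDegree_mul_le (by omega)
      have hmul : (n-2)*w + 2*w = n*w := by
        rw [← add_mul]
        congr 1
        omega
      omega
  -- the main coefficient formula in the top range
  have hform : ∀ e, G + n*w - w ≤ e →
      (D * Q.comp (X^w)).coeff e
        = (if n*w ≤ e then D.coeff (e - n*w) else 0)
        - (if (n-1)*w ≤ e then D.coeff (e - (n-1)*w) else 0) := by
    intro e he
    have hsplit : D * Q.comp (X^w)
        = D * X^(n*w) - D * X^((n-1)*w) + R.comp (X^w) * D := by
      rw [hcomp]; ring
    rw [hsplit, coeff_add, coeff_sub, coeff_mul_X_pow', coeff_mul_X_pow', hRD e he]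
    ring
  have hmul1 : (n-1)*w + w = n*w := by
    obtain ⟨n', rfl⟩ : ∃ n', n = n' + 1 := ⟨n - 1, by omega⟩
    simp only [Nat.add_sub_cancel]
    ring
  have hwG : w ≤ G := by omega
  have hwmb : m*b + 2 ≤ w := by omega
  refine ⟨?_, ?_, ?_⟩
  · -- e = G + n*w - m*b - 1
    have hle : G + n*w - w ≤ G + n*w - m*b - 1 := by omega
    rw [hform _ hle, if_pos (by omega), if_pos (by omega)]
    rw [show G + n*w - m*b - 1 - n*w = G - (m*b+1) from by omega]
    rw [hhigh (G + n*w - m*b - 1 - (n-1)*w) (by omega)]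
    rw [key (m*b+1) (by omega)]
    have : (m*b+1) % b = 1 := by
      rw [mul_comm, Nat.mul_add_mod, Nat.mod_eq_of_lt (by omega)]
    rw [this]
    norm_num
  · -- e = G + n*w - w
    rw [hform _ le_rfl, if_pos (by omega), if_pos (by omega)]
    rw [show G + n*w - w - n*w = G - w from by omega,
      show G + n*w - w - (n-1)*w = G - 0 from by omega]
    rw [key w hwa, key 0 (by omega)]
    have h1 : w % b = r := by
      rw [hwmr, mul_comm, Nat.mul_add_mod, Nat.mod_eq_of_lt hrb]
    rw [h1, if_neg (by omega), if_neg (by omega)]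
    simp
  · intro e he1 he2
    rw [hform _ (le_of_lt he1), if_pos (by omega), if_pos (by omega)]
    rw [hhigh (e - (n-1)*w) (by omega)]
    set k := G + n*w - e with hk
    rw [show e - n*w = G - k from by omega]
    rw [key k (by omega)]
    have hbm : m * b = b * m := mul_comm m b
    have hkk : k = b * m + (k - m*b) := by omega
    have h1 : k % b = k - m*b := by
      conv_lhs => rw [hkk]
      rw [Nat.mul_add_mod, Nat.mod_eq_of_lt (by omega)]
    rw [h1, if_neg (by omega), if_neg (by omega)]
    ring
end

section
/- Let a > b ≥ 2 be coprime integers and let D ∈ ℤ[X] be the unique polynomial with (X^a − 1)·(X^b − 1)·D = (X^{ab} − 1)·(X − 1). Let Q ∈ ℤ[X] be monic of degree n ≥ 1 with coefficient of X^{n−1} equal to −1, let w be a natural number with 1 ≤ w < a, and set P = D·Q(X^w). If every coefficient of P lies in {−1, 0, 1} and the nonzero coefficients of P alternate in sign, then b divides w. -/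
open Polynomial

/-- The nonzero coefficients of `P ∈ ℤ[X]` alternate in sign: whenever `i < j`, the
coefficients of `X^i` and `X^j` are nonzero, and all coefficients strictly in between
vanish, then the two coefficients have opposite signs. -/
def AlternatesInSign (P : Polynomial ℤ) : Prop :=
  ∀ i j : ℕ, i < j → P.coeff i ≠ 0 → P.coeff j ≠ 0 →
    (∀ k : ℕ, i < k → k < j → P.coeff k = 0) → P.coeff i * P.coeff j < 0

/-- If all coefficients of `P = D·Q(X^w)` lie in `{−1,0,1}` and its nonzero coefficients
alternate in sign, then `b` divides `w` (Lemma 3.2 of the paper). -/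
theorem stmt_7 (a b : ℕ) (hb : 2 ≤ b) (hba : b < a) (hcop : Nat.Coprime a b)
    (D : Polynomial ℤ)
    (hD : (X ^ a - 1) * (X ^ b - 1) * D = (X ^ (a * b) - 1) * (X - 1))
    (Q : Polynomial ℤ) (n : ℕ) (hn : 1 ≤ n)
    (hQmon : Q.Monic) (hQdeg : Q.natDegree = n) (hQ : Q.coeff (n - 1) = -1)
    (w : ℕ) (hw1 : 1 ≤ w) (hwa : w < a)
    (hcoeffs : ∀ k : ℕ, (D * Q.comp (X ^ w)).coeff k ∈ ({-1, 0, 1} : Set ℤ))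
    (halt : AlternatesInSign (D * Q.comp (X ^ w))) :
    b ∣ w := by
  have ha : 3 ≤ a := by omega
  -- monicity of the factors
  have mXa : ((X : ℤ[X])^a - 1).Monic := by
    simpa using monic_X_pow_sub_C (1:ℤ) (by omega : a ≠ 0)
  have mXb : ((X : ℤ[X])^b - 1).Monic := by
    simpa using monic_X_pow_sub_C (1:ℤ) (by omega : b ≠ 0)
  have mXab : ((X : ℤ[X])^(a*b) - 1).Monic := by
    simpa using monic_X_pow_sub_C (1:ℤ) (by positivity : a*b ≠ 0)
  have mX1 : ((X : ℤ[X]) - 1).Monic := by simpa using monic_X_sub_C (1:ℤ)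
  have hD0 : D ≠ 0 := by
    intro h
    rw [h, mul_zero] at hD
    exact (mXab.mul mX1).ne_zero hD.symm
  -- degree of D
  set d : ℕ := D.natDegree with hd_def
  have hdegXn : ∀ c : ℕ, ((X : ℤ[X])^c - 1).natDegree = c := fun c => by
    simpa using natDegree_X_pow_sub_C (n := c) (r := (1:ℤ))
  have hd1 : a + b + d = a*b + 1 := by
    have h := congrArg natDegree hD
    rw [natDegree_mul (mul_ne_zero mXa.ne_zero mXb.ne_zero) hD0,
        natDegree_mul mXa.ne_zero mXb.ne_zero,
        natDegree_mul mXab.ne_zero mX1.ne_zero,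
        hdegXn, hdegXn, hdegXn,
        show ((X : ℤ[X]) - 1).natDegree = 1 from by simpa using natDegree_X_sub_C (1:ℤ)] at h
    omega
  have hwd : w ≤ d := by nlinarith
  -- leading coefficient of D
  have hlc : D.coeff d = 1 := by
    have h := congrArg leadingCoeff hD
    rw [leadingCoeff_mul, leadingCoeff_mul, leadingCoeff_mul, mXa.leadingCoeff,
        mXb.leadingCoeff, mXab.leadingCoeff, mX1.leadingCoeff] at h
    have h2 : D.leadingCoeff = 1 := by simpa using h
    exact h2
  have hzero : ∀ m, d < m → D.coeff m = 0 := fun m hm =>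
    coeff_eq_zero_of_natDegree_lt hm
  -- coefficients of the RHS
  have hrhs : ∀ N : ℕ, ((X^(a*b) - 1) * (X - 1) : ℤ[X]).coeff N =
      (if N = a*b+1 then 1 else 0) - (if N = a*b then 1 else 0)
        - (if N = 1 then 1 else 0) + (if N = 0 then 1 else 0) := by
    intro N
    rw [show ((X^(a*b) - 1) * (X - 1) : ℤ[X]) = X^(a*b+1) - X^(a*b) - X + 1 from by ring]
    simp only [coeff_add, coeff_sub, coeff_X_pow, coeff_one, coeff_X]
    split_ifs <;> omega
  -- the recurrence from hD
  have hrec : ∀ m : ℕ, D.coeff m + D.coeff (m+a+b) =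
      ((X^(a*b) - 1) * (X - 1) : ℤ[X]).coeff (m+a+b)
        + D.coeff (m+b) + D.coeff (m+a) := by
    intro m
    have hexp2 : (X^a - 1) * (X^b - 1) * D = D*X^b*X^a - D*X^a - D*X^b + D := by ring
    have h2 : ((D*X^b*X^a) - D*X^a - D*X^b + D).coeff (m+a+b)
        = ((X^(a*b) - 1) * (X - 1) : ℤ[X]).coeff (m+a+b) := by
      rw [← hexp2, hD]
    have e1 : ((D*X^b*X^a) : ℤ[X]).coeff (m+a+b) = D.coeff m := by
      rw [coeff_mul_X_pow', if_pos (by omega), show m+a+b-a = m+b from by omega,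
          coeff_mul_X_pow', if_pos (by omega), show m+b-b = m from by omega]
    have e2 : ((D*X^a) : ℤ[X]).coeff (m+a+b) = D.coeff (m+b) := by
      rw [coeff_mul_X_pow', if_pos (by omega)]; congr 1; omega
    have e3 : ((D*X^b) : ℤ[X]).coeff (m+a+b) = D.coeff (m+a) := by
      rw [coeff_mul_X_pow', if_pos (by omega)]; congr 1; omega
    simp only [coeff_add, coeff_sub, e1, e2, e3] at h2
    linarith
  -- one step of the top-coefficient recursion
  have hstep : ∀ k : ℕ, k ≤ d → k < a →
      D.coeff (d - k) = (if k = 0 then 1 else 0) - (if k = 1 then 1 else 0)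
        + D.coeff (d - k + b) := by
    intro k hkd hka
    have h := hrec (d - k)
    rw [hrhs] at h
    have c1 : (d - k + a + b = a*b+1) ↔ k = 0 := by omega
    have c2 : (d - k + a + b = a*b) ↔ k = 1 := by omega
    simp only [c1, c2, if_neg (show ¬(d - k + a + b = 1) from by omega),
      if_neg (show ¬(d - k + a + b = 0) from by omega)] at h
    rw [hzero (d-k+a) (by omega), hzero (d-k+a+b) (by omega)] at h
    linarith
  -- closed form of the top coefficients of D
  have hDtop : ∀ k : ℕ, k < a → k ≤ d →
      D.coeff (d - k) = (if b ∣ k then 1 else 0)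
        - (if 1 ≤ k ∧ b ∣ (k-1) then 1 else 0) := by
    intro k
    induction k using Nat.strong_induction_on with
    | _ k ih =>
      intro hka hkd
      rcases lt_or_ge k b with hkb | hkb
      · -- base case k < b
        rw [hstep k hkd hka, hzero (d - k + b) (by omega)]
        have h1 : (b ∣ k) ↔ k = 0 :=
          ⟨fun h => Nat.eq_zero_of_dvd_of_lt h hkb, fun h => h ▸ dvd_zero b⟩
        have h2 : (1 ≤ k ∧ b ∣ (k-1)) ↔ k = 1 := by
          constructor
          · rintro ⟨h1', h2'⟩
            have := Nat.eq_zero_of_dvd_of_lt h2' (by omega)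
            omega
          · rintro rfl
            exact ⟨le_refl 1, by simp⟩
        simp only [h1, h2]
        ring
      · -- inductive case b ≤ k
        rw [hstep k hkd hka, if_neg (by omega), if_neg (by omega),
            show d - k + b = d - (k - b) from by omega]
        rw [ih (k-b) (by omega) (by omega) (by omega)]
        have h1 : (b ∣ (k - b)) ↔ b ∣ k := by
          constructor
          · intro h
            have : k = (k - b) + b := by omega
            rw [this]; exact h.add (dvd_refl b)
          · intro h
            exact Nat.dvd_sub h (dvd_refl b)
        have h2 : (1 ≤ k - b ∧ b ∣ (k - b - 1)) ↔ (1 ≤ k ∧ b ∣ (k-1)) := by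
          constructor
          · rintro ⟨h1', h2'⟩
            refine ⟨by omega, ?_⟩
            have : k - 1 = (k - b - 1) + b := by omega
            rw [this]; exact h2'.add (dvd_refl b)
          · rintro ⟨h1', h2'⟩
            rcases eq_or_lt_of_le hkb with heq | hlt
            · exfalso
              have h3 : b ∣ (b - 1) := by rw [show b - 1 = k - 1 from by omega]; exact h2'
              have := Nat.eq_zero_of_dvd_of_lt h3 (by omega)
              omega
            · refine ⟨by omega, ?_⟩
              have : k - b - 1 = (k - 1) - b := by omega
              rw [this]; exact Nat.dvd_sub h2' (dvd_refl b)
        simp only [h1, h2]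
        ring
  -- the polynomial P and the correction term R
  set P : ℤ[X] := D * Q.comp (X ^ w) with hP_def
  set R : ℤ[X] := Q + X^(n-1) - X^n with hR_def
  have hQtop : Q.coeff n = 1 := by
    have h := hQmon.coeff_natDegree
    rwa [hQdeg] at h
  have hRn : ∀ j, n - 2 < j → R.coeff j = 0 := by
    intro j hj
    rw [hR_def]
    simp only [coeff_sub, coeff_add, coeff_X_pow]
    by_cases hj1 : j = n - 1
    · subst hj1
      rw [hQ, if_pos rfl, if_neg (by omega)]
      ring
    · by_cases hj2 : j = n
      · subst hj2
        rw [hQtop, if_neg (by omega), if_pos rfl]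
        ring
      · rw [coeff_eq_zero_of_natDegree_lt (by rw [hQdeg]; omega),
            if_neg (by omega), if_neg (by omega)]
        ring
  have hRz : n = 1 → R = 0 := by
    intro h1
    apply Polynomial.ext
    intro j
    rw [coeff_zero]
    rcases Nat.eq_zero_or_pos j with rfl | hj
    · rw [hR_def]
      simp only [coeff_sub, coeff_add, coeff_X_pow]
      rw [show Q.coeff 0 = -1 from by simpa [h1] using hQ,
          if_pos (by omega), if_neg (by omega)]
      ring
    · exact hRn j (by omega)
  have hRdeg : 2 ≤ n → (R.comp (X^w)).natDegree ≤ (n-2) * w :=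
    fun h2 =>
      le_trans natDegree_comp_le (by
        rw [natDegree_X_pow]
        exact Nat.mul_le_mul_right w
          (natDegree_le_iff_coeff_eq_zero.mpr fun N hN => hRn N hN))
  have hQsplit : Q.comp (X^w) = X^(w*n) - X^(w*(n-1)) + R.comp (X^w) := by
    have hQeq : Q = X^n - X^(n-1) + R := by rw [hR_def]; ring
    rw [show Q.comp (X^w) = (X^n - X^(n-1) + R).comp (X^w) from by rw [← hQeq],
        add_comp, sub_comp, X_pow_comp, X_pow_comp, ← pow_mul, ← pow_mul]
  have hwn1 : w ≤ w * n := by nlinarith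
  -- coefficients of P in the top window
  have hPco : ∀ k : ℕ, k ≤ w → P.coeff (d + (w*n - k)) =
      D.coeff (d - k) + (if k = w then -1 else 0) := by
    intro k hkw
    have hwn : w * (n - 1) + w = w * n := by
      cases n with
      | zero => omega
      | succ m => simp [Nat.mul_succ]
    rw [show P = D * (X^(w*n) - X^(w*(n-1)) + R.comp (X^w)) from by
          rw [hP_def, hQsplit],
        mul_add, mul_sub]
    simp only [coeff_add, coeff_sub]
    have e1 : (D * X^(w*n)).coeff (d + (w*n - k)) = D.coeff (d - k) := by
      rw [coeff_mul_X_pow', if_pos (by omega)]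
      congr 1
      omega
    have e2 : (D * X^(w*(n-1))).coeff (d + (w*n - k)) = if k = w then 1 else 0 := by
      rw [coeff_mul_X_pow', if_pos (by omega)]
      rcases eq_or_ne k w with heq | hkne
      · rw [if_pos heq, heq, show d + (w*n - w) - w*(n-1) = d from by omega]
        exact hlc
      · rw [if_neg hkne, hzero _ (by omega)]
    have e3 : (D * R.comp (X^w)).coeff (d + (w*n - k)) = 0 := by
      rcases eq_or_lt_of_le hn with h1 | h2
      · rw [hRz h1.symm]
        simp
      · apply coeff_eq_zero_of_natDegree_lt
        have h3 : (n-2)*w + 2*w = n*w := by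
          rw [← Nat.add_mul, Nat.sub_add_cancel h2]
        have h4 : n*w = w*n := Nat.mul_comm n w
        calc (D * R.comp (X^w)).natDegree ≤ d + (n-2)*w :=
              le_trans natDegree_mul_le (Nat.add_le_add_left (hRdeg h2) d)
          _ < d + (w*n - k) := by omega
    rw [e1, e2, e3]
    split_ifs <;> ring
  -- endgame
  by_cases hbw : b ∣ w
  · exact hbw
  exfalso
  have hDw : D.coeff (d - w) = -(if 1 ≤ w ∧ b ∣ (w-1) then 1 else 0) := by
    rw [hDtop w hwa hwd, if_neg hbw]
    ring
  have hcw : P.coeff (d + (w*n - w)) = D.coeff (d - w) - 1 := by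
    rw [hPco w le_rfl, if_pos rfl]
    ring
  by_cases hbw1 : b ∣ (w - 1)
  · -- a coefficient equal to -2, contradicting hcoeffs
    have h2 : P.coeff (d + (w*n - w)) = -2 := by
      rw [hcw, hDw, if_pos ⟨hw1, hbw1⟩]
      ring
    have h3 := hcoeffs (d + (w*n - w))
    rw [h2] at h3
    norm_num [Set.mem_insert_iff, Set.mem_singleton_iff] at h3
  · -- two consecutive nonzero coefficients both equal to -1
    have hmod := Nat.div_add_mod w b
    have hs0 : w % b ≠ 0 := fun h => hbw (Nat.dvd_of_mod_eq_zero h)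
    have hs1 : w % b ≠ 1 := fun h => hbw1 ⟨w / b, by omega⟩
    have hsb : w % b < b := Nat.mod_lt w (by omega)
    set k' := w - w % b + 1 with hk'_def
    have hqb : k' - 1 = b * (w / b) := by omega
    have hk'w : k' < w := by omega
    have hbk'1 : b ∣ (k' - 1) := ⟨w / b, hqb⟩
    have hbk' : ¬ b ∣ k' := by
      intro h
      have h4 : b ∣ (k' - (k' - 1)) := Nat.dvd_sub h hbk'1
      rw [show k' - (k' - 1) = 1 from by omega] at h4
      exact absurd (Nat.le_of_dvd one_pos h4) (by omega)
    have hi : P.coeff (d + (w*n - w)) = -1 := by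
      rw [hcw, hDw, if_neg (fun h => hbw1 h.2)]
      ring
    have hj : P.coeff (d + (w*n - k')) = -1 := by
      rw [hPco k' (by omega), if_neg (by omega),
          hDtop k' (by omega) (by omega), if_neg hbk', if_pos ⟨by omega, hbk'1⟩]
      ring
    have hij : d + (w*n - w) < d + (w*n - k') := by omega
    have hgap : ∀ m, d + (w*n - w) < m → m < d + (w*n - k') → P.coeff m = 0 := by
      intro m hm1 hm2
      set k := d + w*n - m with hk_def
      have hmk : m = d + (w*n - k) := by omega
      have hkr : k' < k ∧ k < w := by omega
      rw [hmk, hPco k (by omega), if_neg (by omega), hDtop k (by omega) (by omega)]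
      have c1 : ¬ b ∣ k := by
        intro h
        have h4 := Nat.dvd_sub h hbk'1
        have h5 := Nat.eq_zero_of_dvd_of_lt h4 (show k - (k'-1) < b from by omega)
        omega
      have c2 : ¬ (1 ≤ k ∧ b ∣ (k-1)) := by
        rintro ⟨-, h⟩
        have h4 := Nat.dvd_sub h hbk'1
        have h5 := Nat.eq_zero_of_dvd_of_lt h4 (show (k-1) - (k'-1) < b from by omega)
        omega
      rw [if_neg c1, if_neg c2]
      ring
    have hfin := halt _ _ hij (by rw [hi]; norm_num) (by rw [hj]; norm_num) hgap
    rw [hi, hj] at hfin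
    norm_num at hfin
end

section
/- Let a > b ≥ 2 be coprime integers, let D ∈ ℤ[X] be the unique polynomial with (X^a − 1)·(X^b − 1)·D = (X^{ab} − 1)·(X − 1), and let Q ∈ ℤ[X] be monic of degree n ≥ 1 with coefficient of X^{n−1} equal to −1. Suppose k and w are positive integers with a·b = k·w², and set P = D·Q(X^w). Then it is NOT the case that every coefficient of P lies in {−1, 0, 1} and the nonzero coefficients of P alternate in sign. -/
open Polynomial

/-!
Write `S` for the additive semigroup generated by `a` and `b`, and `F = ab - a - b` for its
Frobenius number. In `ℤ⟦X⟧` one has `D = (1 - X) · ∑_{s ∈ S} X^s`, so the partial sums of the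
coefficients of `P = D · Q(X^w)` are `∑ᵢ Qᵢ · [m - iw ∈ S]`. Since `w² ∣ ab`, `w ∉ S`, hence
`F - w ∈ S` by the symmetry of `S`. Comparing the partial sums up to the degree `F + 1 + nw` of
`P` and up to `F + (n - 1)w`, only the term `i = n - 1` differs, so the `w` coefficients just
below the leading one sum to `Q_{n-1} - 1 = -2`. But a `{-1, 0, 1}`-valued sequence whose
nonzero terms alternate in sign has all its block sums in `{-1, 0, 1}`.
-/

namespace AlternatesInSign

variable {P : ℤ[X]}

theorem sum_Ico_eq_zero_or_eq_coeff (hP : AlternatesInSign P)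
    (hc : ∀ j, P.coeff j ∈ ({-1, 0, 1} : Set ℤ)) (i m : ℕ) :
    ∑ j ∈ Finset.Ico i m, P.coeff j = 0 ∨ ∃ l ∈ Finset.Ico i m, P.coeff l ≠ 0 ∧
      (∀ k, l < k → k < m → P.coeff k = 0) ∧ ∑ j ∈ Finset.Ico i m, P.coeff j = P.coeff l := by
  induction m with
  | zero => simp
  | succ m ih =>
    rcases lt_or_ge m i with hm | hm
    · simp [Finset.Ico_eq_empty_of_le (Nat.succ_le_of_lt hm)]
    rw [Finset.sum_Ico_succ_top hm]
    by_cases hcm : P.coeff m = 0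
    · rw [hcm, add_zero]
      refine ih.imp_right fun ⟨l, hl, hl0, hgap, hsum⟩ =>
        ⟨l, ?_, hl0, fun k hlk hkm => ?_, hsum⟩
      · simp only [Finset.mem_Ico] at hl ⊢; omega
      · rcases Nat.lt_succ_iff_lt_or_eq.mp hkm with hkm | rfl
        exacts [hgap k hlk hkm, hcm]
    rcases ih with h0 | ⟨l, hl, hl0, hgap, hsum⟩
    · exact .inr ⟨m, by simp [hm], hcm, fun k h1 h2 => by omega, by rw [h0, zero_add]⟩
    · have hneg := hP l m (Finset.mem_Ico.mp hl).2 hl0 hcm hgap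
      have hl1 := hc l
      have hm1 := hc m
      simp only [Set.mem_insert_iff, Set.mem_singleton_iff] at hl1 hm1
      left
      rw [hsum]
      rcases hl1 with hl1 | hl1 | hl1 <;> rcases hm1 with hm1 | hm1 | hm1 <;> simp_all

theorem abs_sum_Ico_le_one (hP : AlternatesInSign P)
    (hc : ∀ j, P.coeff j ∈ ({-1, 0, 1} : Set ℤ)) (i m : ℕ) :
    |∑ j ∈ Finset.Ico i m, P.coeff j| ≤ 1 := by
  rcases hP.sum_Ico_eq_zero_or_eq_coeff hc i m with h | ⟨l, -, -, -, h⟩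
  · simp [h]
  · rw [h]
    rcases hc l with h | h | h <;> simp_all

end AlternatesInSign

section NumericalSemigroup

variable {a b : ℕ}

theorem Nat.mem_closure_pair_iff {t : ℕ} :
    t ∈ AddSubmonoid.closure ({a, b} : Set ℕ) ↔ ∃ x y : ℕ, x * a + y * b = t := by
  simp [AddSubmonoid.mem_closure_pair]

theorem Nat.Coprime.mem_closure_pair_and_sub_notMem_iff (hcop : a.Coprime b) (hb : 0 < b)
    (t : ℕ) :
    (t ∈ AddSubmonoid.closure ({a, b} : Set ℕ) ∧
        (a ≤ t → t - a ∉ AddSubmonoid.closure ({a, b} : Set ℕ))) ↔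
      ∃ y < a, t = y * b := by
  simp only [Nat.mem_closure_pair_iff]
  constructor
  · rintro ⟨⟨x, y, rfl⟩, hmin⟩
    rcases Nat.eq_zero_or_pos x with rfl | hx
    · refine ⟨y, lt_of_not_ge fun hy => ?_, by simp⟩
      have hab : a * b ≤ y * b := Nat.mul_le_mul_right b hy
      have ha : a ≤ a * b := Nat.le_mul_of_pos_right a hb
      refine hmin (by omega) ⟨b - 1, y - a, ?_⟩
      rw [Nat.sub_one_mul, Nat.sub_mul, Nat.mul_comm b a]
      omega
    · have : a ≤ x * a := Nat.le_mul_of_pos_left a hx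
      exact (hmin (by omega) ⟨x - 1, y, by rw [Nat.sub_one_mul]; omega⟩).elim
  · rintro ⟨y, hy, rfl⟩
    refine ⟨⟨0, y, by simp⟩, fun hle ⟨x, z, hxz⟩ => ?_⟩
    have hdvd : b ∣ (x + 1) * a := by
      refine (Nat.dvd_add_right (Nat.dvd_mul_left b z)).mp ⟨y, ?_⟩
      rw [Nat.add_one_mul, Nat.mul_comm b y]; omega
    have hbx := Nat.le_of_dvd (by omega) (hcop.symm.dvd_of_dvd_mul_right hdvd)
    have : b * a ≤ (x + 1) * a := Nat.mul_le_mul_right a hbx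
    have : y * b < a * b := Nat.mul_lt_mul_of_pos_right hy hb
    rw [Nat.add_one_mul, Nat.mul_comm b a] at *
    omega

theorem Nat.Coprime.frobenius_sub_mem_closure_pair_of_notMem (hcop : a.Coprime b) (ha : 1 < a)
    (hb : 1 < b) {m : ℕ} (hm : m ∉ AddSubmonoid.closure ({a, b} : Set ℕ)) :
    a * b - a - b - m ∈ AddSubmonoid.closure ({a, b} : Set ℕ) := by
  suffices ∀ j, m + j * a ∈ AddSubmonoid.closure ({a, b} : Set ℕ) →
      a * b - a - b - m ∈ AddSubmonoid.closure ({a, b} : Set ℕ) by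
    refine this (a * b) ((frobeniusNumber_iff.mp (frobeniusNumber_pair hcop ha hb)).2 _ ?_)
    have : a * b ≤ a * b * a := Nat.le_mul_of_pos_right _ (by omega)
    have : 0 < a * b := Nat.mul_pos (by omega) (by omega)
    omega
  intro j
  induction j with
  | zero => simpa using fun h => (hm h).elim
  | succ j ih =>
    intro hj
    by_cases hprev : m + j * a ∈ AddSubmonoid.closure ({a, b} : Set ℕ)
    · exact ih hprev
    -- `m + (j + 1) a` lies in the Apéry set, so it is `y b` with `y < a`
    obtain ⟨y, hy, hyb⟩ := (hcop.mem_closure_pair_and_sub_notMem_iff (by omega) _).mp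
      ⟨hj, fun _ => by rwa [Nat.add_one_mul, ← Nat.add_assoc, Nat.add_sub_cancel]⟩
    refine Nat.mem_closure_pair_iff.mpr ⟨j, a - 1 - y, ?_⟩
    have : (y + 1) * b ≤ a * b := Nat.mul_le_mul_right b hy
    rw [Nat.add_one_mul] at this hyb
    rw [Nat.sub_mul, Nat.sub_mul, Nat.one_mul]
    omega

theorem Nat.Coprime.notMem_closure_pair_of_sq_dvd (hcop : a.Coprime b) (hb : 1 < b)
    (hba : b < a) {w : ℕ} (hw : 0 < w) (hdvd : w ^ 2 ∣ a * b) :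
    w ∉ AddSubmonoid.closure ({a, b} : Set ℕ) := by
  rw [Nat.mem_closure_pair_iff]
  rintro ⟨x, y, rfl⟩
  have hwa : x * a + y * b < a := by
    have := Nat.le_of_dvd (Nat.mul_pos (by omega) (by omega)) hdvd
    nlinarith
  obtain rfl : x = 0 := by
    by_contra hx
    have := Nat.le_mul_of_pos_left a (Nat.pos_of_ne_zero hx)
    omega
  have hba' : b ∣ a := by
    refine Nat.dvd_of_mul_dvd_mul_right (by omega : 0 < b) (dvd_trans ?_ hdvd)
    exact ⟨y * y, by ring⟩
  have := Nat.Coprime.eq_one_of_dvd hcop.symm hba'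
  omega

end NumericalSemigroup

section SemigroupSeries

variable {a b : ℕ}

noncomputable def semigroupSeries (a b : ℕ) : PowerSeries ℤ :=
  PowerSeries.mk ((AddSubmonoid.closure ({a, b} : Set ℕ) : Set ℕ).indicator 1)

theorem coeff_semigroupSeries (t : ℕ) :
    PowerSeries.coeff t (semigroupSeries a b) =
      (AddSubmonoid.closure ({a, b} : Set ℕ) : Set ℕ).indicator 1 t :=
  PowerSeries.coeff_mk _ _

theorem coeff_semigroupSeries_of_mem {t : ℕ}
    (ht : t ∈ AddSubmonoid.closure ({a, b} : Set ℕ)) :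
    PowerSeries.coeff t (semigroupSeries a b) = 1 := by
  simp [coeff_semigroupSeries, ht]

theorem coeff_semigroupSeries_of_notMem {t : ℕ}
    (ht : t ∉ AddSubmonoid.closure ({a, b} : Set ℕ)) :
    PowerSeries.coeff t (semigroupSeries a b) = 0 := by
  simp [coeff_semigroupSeries, ht]

theorem PowerSeries.coeff_sum_range_pow_X_pow {R : Type*} [CommSemiring R] (hb : 0 < b)
    (a t : ℕ) :
    coeff t (∑ y ∈ Finset.range a, ((X : PowerSeries R) ^ b) ^ y) =
      if ∃ y < a, t = y * b then 1 else 0 := by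
  simp_rw [map_sum, ← pow_mul, coeff_X_pow]
  split_ifs with h
  · obtain ⟨y, hy, rfl⟩ := h
    rw [Finset.sum_eq_single_of_mem y (Finset.mem_range.mpr hy) fun z _ hzy => if_neg ?_,
      if_pos (mul_comm _ _)]
    rw [mul_comm b]
    exact fun h => hzy (Nat.eq_of_mul_eq_mul_right hb h).symm
  · exact Finset.sum_eq_zero fun y hy =>
      if_neg fun hty => h ⟨y, Finset.mem_range.mp hy, by rw [hty, mul_comm]⟩

theorem Nat.Coprime.one_sub_X_pow_mul_semigroupSeries (hcop : a.Coprime b) (hb : 0 < b) :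
    (1 - PowerSeries.X ^ a) * semigroupSeries a b =
      ∑ y ∈ Finset.range a, (PowerSeries.X ^ b) ^ y := by
  ext t
  have key := hcop.mem_closure_pair_and_sub_notMem_iff hb t
  have hmono : a ≤ t → t - a ∈ AddSubmonoid.closure ({a, b} : Set ℕ) →
      t ∈ AddSubmonoid.closure ({a, b} : Set ℕ) := fun hat h => by
    simpa [Nat.sub_add_cancel hat] using
      add_mem h (AddSubmonoid.subset_closure (Set.mem_insert a {b}))
  rw [PowerSeries.coeff_sum_range_pow_X_pow hb, sub_mul, one_mul, map_sub,
    PowerSeries.coeff_X_pow_mul', coeff_semigroupSeries, coeff_semigroupSeries]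
  by_cases ht : t ∈ AddSubmonoid.closure ({a, b} : Set ℕ) <;>
    by_cases hsub : a ≤ t ∧ t - a ∈ AddSubmonoid.closure ({a, b} : Set ℕ) <;>
    simp_all

theorem Nat.Coprime.one_sub_X_pow_mul_one_sub_X_pow_mul_semigroupSeries (hcop : a.Coprime b)
    (hb : 0 < b) :
    (1 - PowerSeries.X ^ a) * (1 - PowerSeries.X ^ b) * semigroupSeries a b =
      1 - PowerSeries.X ^ (a * b) := by
  rw [mul_right_comm, hcop.one_sub_X_pow_mul_semigroupSeries hb, geom_sum_mul_neg, ← pow_mul,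
    mul_comm]

theorem Nat.Coprime.coe_eq_one_sub_X_mul_semigroupSeries (hcop : a.Coprime b) (ha : 0 < a)
    (hb : 0 < b) {D : ℤ[X]}
    (hD : (X ^ a - 1) * (X ^ b - 1) * D = (X ^ (a * b) - 1) * (X - 1)) :
    (D : PowerSeries ℤ) = (1 - PowerSeries.X) * semigroupSeries a b := by
  have hunit : IsUnit ((1 - PowerSeries.X ^ a) * (1 - PowerSeries.X ^ b) : PowerSeries ℤ) := by
    simp [PowerSeries.isUnit_iff_constantCoeff, ha.ne', hb.ne']
  refine hunit.mul_left_cancel ?_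
  have hD' := congrArg (fun p : ℤ[X] => (p : PowerSeries ℤ)) hD
  push_cast at hD'
  rw [mul_left_comm, hcop.one_sub_X_pow_mul_one_sub_X_pow_mul_semigroupSeries hb]
  linear_combination hD'

end SemigroupSeries

theorem PowerSeries.sum_range_coeff_one_sub_X_mul {R : Type*} [CommRing R] (g : PowerSeries R)
    (t : ℕ) : ∑ j ∈ Finset.range (t + 1), coeff j ((1 - X) * g) = coeff t g := by
  induction t with
  | zero => simp
  | succ t ih =>
    rw [Finset.sum_range_succ, ih, sub_mul, one_mul, map_sub, coeff_succ_X_mul]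
    ring

theorem PowerSeries.coeff_mul_comp_X_pow {R : Type*} [CommRing R] (g : PowerSeries R)
    (Q : R[X]) (w t : ℕ) :
    coeff t (g * (Q.comp (Polynomial.X ^ w) : PowerSeries R)) =
      ∑ i ∈ Finset.range (Q.natDegree + 1),
        Q.coeff i * if i * w ≤ t then coeff (t - i * w) g else 0 := by
  conv_lhs => rw [Q.as_sum_range_C_mul_X_pow]
  simp only [Polynomial.sum_comp, Polynomial.mul_comp, Polynomial.C_comp, Polynomial.X_pow_comp]
  rw [← Polynomial.coeToPowerSeries.ringHom_apply, map_sum]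
  simp only [map_mul, map_pow, Polynomial.coeToPowerSeries.ringHom_apply, Polynomial.coe_C,
    Polynomial.coe_X]
  rw [Finset.mul_sum, map_sum]
  refine Finset.sum_congr rfl fun i _ => ?_
  rw [mul_left_comm, coeff_C_mul, ← pow_mul, mul_comm w, coeff_mul_X_pow']

section PartialSums

variable {a b : ℕ} {D : ℤ[X]}

theorem sum_range_coeff_mul_comp_X_pow
    (hD : (D : PowerSeries ℤ) = (1 - PowerSeries.X) * semigroupSeries a b) (Q : ℤ[X])
    (w t : ℕ) :
    ∑ j ∈ Finset.range (t + 1), (D * Q.comp (X ^ w)).coeff j =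
      ∑ i ∈ Finset.range (Q.natDegree + 1), Q.coeff i *
        if i * w ≤ t then PowerSeries.coeff (t - i * w) (semigroupSeries a b) else 0 := by
  rw [← PowerSeries.coeff_mul_comp_X_pow, ← PowerSeries.sum_range_coeff_one_sub_X_mul,
    ← mul_assoc, ← hD]
  simp only [← Polynomial.coe_mul, Polynomial.coeff_coe]

theorem coeff_succ_eq_sub
    (hD : (D : PowerSeries ℤ) = (1 - PowerSeries.X) * semigroupSeries a b) (t : ℕ) :
    D.coeff (t + 1) = PowerSeries.coeff (t + 1) (semigroupSeries a b) -
      PowerSeries.coeff t (semigroupSeries a b) := by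
  rw [← Polynomial.coeff_coe, hD, sub_mul, one_mul, map_sub, PowerSeries.coeff_succ_X_mul]

theorem Nat.Coprime.natDegree_le_and_coeff_eq_one (hcop : a.Coprime b) (ha : 1 < a)
    (hb : 1 < b) (hD : (D : PowerSeries ℤ) = (1 - PowerSeries.X) * semigroupSeries a b) :
    D.natDegree ≤ a * b - a - b + 1 ∧ D.coeff (a * b - a - b + 1) = 1 := by
  obtain ⟨hF, hlarge⟩ := frobeniusNumber_iff.mp (frobeniusNumber_pair hcop ha hb)
  refine ⟨natDegree_le_iff_coeff_eq_zero.mpr fun t ht => ?_, ?_⟩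
  · obtain ⟨t, rfl⟩ := Nat.exists_eq_add_of_le' (show 1 ≤ t by omega)
    rw [coeff_succ_eq_sub hD, coeff_semigroupSeries_of_mem (hlarge _ (by omega)),
      coeff_semigroupSeries_of_mem (hlarge _ (by omega)), sub_self]
  · rw [coeff_succ_eq_sub hD, coeff_semigroupSeries_of_mem (hlarge _ (by omega)),
      coeff_semigroupSeries_of_notMem hF, sub_zero]

theorem Nat.Coprime.sum_Ico_coeff_mul_comp_X_pow (hcop : a.Coprime b) (ha : 1 < a)
    (hb : 1 < b) (hD : (D : PowerSeries ℤ) = (1 - PowerSeries.X) * semigroupSeries a b)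
    {Q : ℤ[X]} {n w : ℕ} (hQ : Q.natDegree = n + 1)
    (hw : w ∉ AddSubmonoid.closure ({a, b} : Set ℕ)) :
    ∑ j ∈ Finset.Ico (a * b - a - b + n * w + 1) (a * b - a - b + 1 + (n + 1) * w + 1),
      (D * Q.comp (X ^ w)).coeff j = Q.coeff n := by
  obtain ⟨hF, hlarge⟩ := frobeniusNumber_iff.mp (frobeniusNumber_pair hcop ha hb)
  have hwF : w ≤ a * b - a - b := not_lt.mp fun h => hw (hlarge w h)
  have hFw := hcop.frobenius_sub_mem_closure_pair_of_notMem ha hb hw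
  have hw0 : 0 < w := Nat.pos_of_ne_zero fun h => hw (h ▸ zero_mem _)
  have hnw : (n + 1) * w = n * w + w := Nat.add_one_mul n w
  rw [Finset.sum_Ico_eq_sub _ (by omega), sum_range_coeff_mul_comp_X_pow hD,
    sum_range_coeff_mul_comp_X_pow hD, ← Finset.sum_sub_distrib, hQ]
  simp_rw [← mul_sub]
  -- only the term `i = n` survives: it sees `F + w + 1 ∈ S` at the top and `F ∉ S` below
  rw [Finset.sum_eq_single_of_mem n (by simp) fun i hi hin => ?_]
  · rw [if_pos (by omega), if_pos (by omega), coeff_semigroupSeries_of_mem (hlarge _ (by omega)),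
      Nat.add_sub_cancel, coeff_semigroupSeries_of_notMem hF, sub_zero, mul_one]
  rcases Nat.lt_or_gt_of_ne hin with hin | hin
  · have : (i + 1) * w ≤ n * w := Nat.mul_le_mul_right w hin
    rw [Nat.add_one_mul] at this
    rw [if_pos (by omega), if_pos (by omega), coeff_semigroupSeries_of_mem (hlarge _ (by omega)),
      coeff_semigroupSeries_of_mem (hlarge _ (by omega)), sub_self, mul_zero]
  · obtain rfl : i = n + 1 := by simp at hi; omega
    rw [if_pos (by omega), if_pos (by omega), coeff_semigroupSeries_of_mem (hlarge _ (by omega)),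
      show a * b - a - b + n * w - (n + 1) * w = a * b - a - b - w by omega,
      coeff_semigroupSeries_of_mem hFw, sub_self, mul_zero]

end PartialSums

theorem stmt_9_general (a b : ℕ) (hb : 2 ≤ b) (hba : b < a) (hcop : Nat.Coprime a b)
    (D : Polynomial ℤ)
    (hD : (X ^ a - 1) * (X ^ b - 1) * D = (X ^ (a * b) - 1) * (X - 1))
    (Q : Polynomial ℤ) (n : ℕ) (hn : 1 ≤ n)
    (hQmon : Q.Monic) (hQdeg : Q.natDegree = n) (hQ : Q.coeff (n - 1) = -1)
    (k w : ℕ) (hw : 0 < w) (hab : a * b = k * w ^ 2) :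
    ¬ ((∀ j : ℕ, (D * Q.comp (X ^ w)).coeff j ∈ ({-1, 0, 1} : Set ℤ)) ∧
        AlternatesInSign (D * Q.comp (X ^ w))) := by
  rintro ⟨hcoeff, halt⟩
  obtain ⟨n, rfl⟩ : ∃ m, n = m + 1 := ⟨n - 1, by omega⟩
  have hDser := hcop.coe_eq_one_sub_X_mul_semigroupSeries (by omega) (by omega) hD
  have hwS := hcop.notMem_closure_pair_of_sq_dvd (by omega) hba hw ⟨k, by rw [hab, mul_comm]⟩
  obtain ⟨hDdeg, hDtop⟩ := hcop.natDegree_le_and_coeff_eq_one (by omega) (by omega) hDser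
  have hRmon : (Q.comp (X ^ w)).Monic := hQmon.comp (monic_X_pow w) (by simp; omega)
  have hRdeg : (Q.comp (X ^ w)).natDegree = (n + 1) * w := by simp [natDegree_comp, hQdeg]
  have htop : (D * Q.comp (X ^ w)).coeff (a * b - a - b + 1 + (n + 1) * w) = 1 := by
    rw [coeff_mul_add_eq_of_natDegree_le hDdeg hRdeg.le, hDtop, ← hRdeg, hRmon.coeff_natDegree,
      one_mul]
  have hsum := hcop.sum_Ico_coeff_mul_comp_X_pow (by omega) (by omega) hDser hQdeg hwS
  rw [Nat.add_sub_cancel] at hQ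
  rw [Finset.sum_Ico_succ_top (by rw [Nat.add_one_mul]; omega), htop, hQ] at hsum
  have hbound := halt.abs_sum_Ico_le_one hcoeff (a * b - a - b + n * w + 1)
    (a * b - a - b + 1 + (n + 1) * w)
  rw [abs_le] at hbound
  linarith [hbound.1]

/-- If `a·b = k·w²` with `k, w` positive, then `P = D·Q(X^w)` cannot have all its
coefficients in `{−1,0,1}` with nonzero coefficients alternating in sign
(Proposition 3.1 of the paper). -/
theorem stmt_9 (a b : ℕ) (hb : 2 ≤ b) (hba : b < a) (hcop : Nat.Coprime a b)
    (D : Polynomial ℤ)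
    (hD : (X ^ a - 1) * (X ^ b - 1) * D = (X ^ (a * b) - 1) * (X - 1))
    (Q : Polynomial ℤ) (n : ℕ) (hn : 1 ≤ n)
    (hQmon : Q.Monic) (hQdeg : Q.natDegree = n) (hQ : Q.coeff (n - 1) = -1)
    (k w : ℕ) (hk : 0 < k) (hw : 0 < w) (hab : a * b = k * w ^ 2) :
    ¬ ((∀ j : ℕ, (D * Q.comp (X ^ w)).coeff j ∈ ({-1, 0, 1} : Set ℤ)) ∧
        AlternatesInSign (D * Q.comp (X ^ w))) :=
  stmt_9_general a b hb hba hcop D hD Q n hn hQmon hQdeg hQ k w hw hab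
end

section
/- Let p and q be coprime integers with q > 0, let w be a positive integer, and let d = gcd(q, w²). If α and β are nonzero complex numbers with α^p·β^q = 1, then there exists a nonzero complex number η such that η^w = α and η^{p·w²/d}·β^{w·q/d} = 1. -/
/-!
Writing `u p + v q = 1`, the element `γ = α^v β^(-u)` satisfies `α = γ^q` and `β = γ^(-p)`.
Then `η = δ^q` works for any `w`-th root `δ` of `γ`: in `η^(p w²/d) β^(w q/d)` the exponents of
`δ` are `± p q w²/d`, which cancel.
-/

theorem exists_zpow_eq_and_zpow_neg_eq_of_zpow_mul_zpow_eq_one {G : Type*} [CommGroup G]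
    {p q : ℤ} (hpq : IsCoprime p q) {a b : G} (h : a ^ p * b ^ q = 1) :
    ∃ c : G, c ^ q = a ∧ c ^ (-p) = b := by
  obtain ⟨u, v, huv⟩ := hpq
  have hap : a ^ p = b ^ (-q) := by rw [zpow_neg, eq_inv_iff_mul_eq_one, h]
  refine ⟨a ^ v * b ^ (-u), ?_, ?_⟩
  · calc (a ^ v * b ^ (-u)) ^ q = a ^ (v * q) * (b ^ (-q)) ^ u := by
          simp only [mul_zpow, ← zpow_mul]; ring_nf
      _ = a ^ (u * p + v * q) := by rw [← hap]; group
      _ = a := by rw [huv, zpow_one]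
  · calc (a ^ v * b ^ (-u)) ^ (-p) = (a ^ p) ^ (-v) * b ^ (u * p) := by
          simp only [mul_zpow, ← zpow_mul]; ring_nf
      _ = b ^ (u * p + v * q) := by rw [hap]; group
      _ = b := by rw [huv, zpow_one]

theorem IsAlgClosed.exists_zpow_eq_units {K : Type*} [Field K] [IsAlgClosed K] {n : ℤ}
    (hn : n ≠ 0) (x : Kˣ) : ∃ y : Kˣ, y ^ n = x := by
  have hroot (m : ℕ) (hm : 0 < m) (z : Kˣ) : ∃ y : Kˣ, y ^ m = z := by
    obtain ⟨y, hy⟩ := IsAlgClosed.exists_pow_nat_eq (z : K) hm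
    have hy0 : y ≠ 0 := by rintro rfl; exact z.ne_zero (by rw [← hy, zero_pow hm.ne'])
    exact ⟨Units.mk0 y hy0, Units.ext (by simpa using hy)⟩
  obtain ⟨m, rfl | rfl⟩ := Int.eq_nat_or_neg n
  · obtain ⟨y, hy⟩ := hroot m (by omega) x
    exact ⟨y, by rw [zpow_natCast, hy]⟩
  · obtain ⟨y, hy⟩ := hroot m (by omega) x⁻¹
    exact ⟨y, by rw [zpow_neg, zpow_natCast, hy, inv_inv]⟩

theorem Int.mul_mul_ediv_eq_mul_mul_ediv {p q w d : ℤ} (hdq : d ∣ q) (hdw : d ∣ w ^ 2) :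
    q * (p * w ^ 2 / d) = p * w * (w * q / d) := by
  rw [Int.mul_ediv_assoc p hdw, Int.mul_ediv_assoc w hdq, mul_left_comm,
    ← Int.mul_ediv_assoc q hdw, mul_comm q, Int.mul_ediv_assoc _ hdq]
  ring

theorem exists_zpow_eq_and_zpow_mul_zpow_eq_one {G : Type*} [CommGroup G] {p q w d : ℤ}
    (hpq : IsCoprime p q) (hdq : d ∣ q) (hdw : d ∣ w ^ 2)
    (hroot : ∀ x : G, ∃ y : G, y ^ w = x) {a b : G} (h : a ^ p * b ^ q = 1) :
    ∃ η : G, η ^ w = a ∧ η ^ (p * w ^ 2 / d) * b ^ (w * q / d) = 1 := by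
  obtain ⟨c, rfl, rfl⟩ := exists_zpow_eq_and_zpow_neg_eq_of_zpow_mul_zpow_eq_one hpq h
  obtain ⟨δ, rfl⟩ := hroot c
  refine ⟨δ ^ q, by rw [← zpow_mul, ← zpow_mul, mul_comm], ?_⟩
  rw [← zpow_mul, ← zpow_mul, ← zpow_mul, Int.mul_mul_ediv_eq_mul_mul_ediv hdq hdw, ← zpow_add]
  ring_nf
  exact zpow_zero δ

theorem stmt_13_general (p q : ℤ) (hcop : IsCoprime p q)
    (w : ℤ) (hw : 0 < w) (d : ℤ) (hd : d = Int.gcd q (w ^ 2))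
    (α β : ℂ) (hα : α ≠ 0) (hβ : β ≠ 0) (h : α ^ p * β ^ q = 1) :
    ∃ η : ℂ, η ≠ 0 ∧ η ^ w = α ∧ η ^ (p * w ^ 2 / d) * β ^ (w * q / d) = 1 := by
  lift α to ℂˣ using hα.isUnit
  lift β to ℂˣ using hβ.isUnit
  have hdq : d ∣ q := hd ▸ Int.gcd_dvd_left q (w ^ 2)
  have hdw : d ∣ w ^ 2 := hd ▸ Int.gcd_dvd_right q (w ^ 2)
  obtain ⟨η, hηw, hη⟩ := exists_zpow_eq_and_zpow_mul_zpow_eq_one hcop hdq hdw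
    (IsAlgClosed.exists_zpow_eq_units hw.ne') (Units.ext (by simpa using h) : α ^ p * β ^ q = 1)
  refine ⟨η, η.ne_zero, ?_, ?_⟩
  · simpa using congrArg Units.val hηw
  · simpa using congrArg Units.val hη

/-- Case 1 of Lemma 5.3: if `α^p·β^q = 1` for nonzero complex numbers `α, β`, with
`p, q` coprime, `q > 0`, `w > 0`, and `d = gcd(q, w²)`, then there is a nonzero complex
number `η` with `η^w = α` and `η^{p·w²/d}·β^{w·q/d} = 1`. -/
theorem stmt_13 (p q : ℤ) (hq : 0 < q) (hcop : IsCoprime p q)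
    (w : ℤ) (hw : 0 < w) (d : ℤ) (hd : d = Int.gcd q (w ^ 2))
    (α β : ℂ) (hα : α ≠ 0) (hβ : β ≠ 0) (h : α ^ p * β ^ q = 1) :
    ∃ η : ℂ, η ≠ 0 ∧ η ^ w = α ∧ η ^ (p * w ^ 2 / d) * β ^ (w * q / d) = 1 :=
  stmt_13_general p q hcop w hw d hd α β hα hβ h
end

section
/- Let p and q be coprime integers with q > 0, let w be a positive integer, and let d = gcd(q, w²). Suppose A and B are elements of SL(2, ℂ) with A·B = B·A, A ≠ I, A ≠ −I, and A^p·B^q = I. Then there exists M ∈ SL(2, ℂ) such that M·B = B·M, either M^w = A or M^w = −A, and M^{p·w²/d}·B^{w·q/d} = I. -/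
/-!
Writing `a * p + b * q = 1`, the commuting elements `A` and `B` are the powers `C ^ q` and
`C ^ (-p)` of the single element `C = A ^ b * B ^ (-a)`. Every `C ∈ SL(2, ℂ)` has a `w`-th root
up to the central sign `-1`, and the root can be taken to be a polynomial in `C`, so it commutes
with `B`: for distinct eigenvalues take roots of them on the two eigen-idempotents, and in the
parabolic case `C = ±(1 + N)` with `N ^ 2 = 0` take `1 + N / w`. With `M = D ^ q` everything
reduces to arithmetic of exponents; the sign only appears for even `w`, where `w * q / d` is even.
-/

section PowerFormulas

variable {R A : Type*} [CommSemiring R]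

theorem IsIdempotentElem.smul_add_smul_one_sub_pow [Ring A] [Algebra R A] {E : A}
    (hE : IsIdempotentElem E) (a b : R) (n : ℕ) :
    (a • E + b • (1 - E)) ^ n = a ^ n • E + b ^ n • (1 - E) := by
  have hE' : E * (1 - E) = 0 := by rw [mul_sub, mul_one, hE.eq, sub_self]
  have hE'' : (1 - E) * E = 0 := by rw [sub_mul, one_mul, hE.eq, sub_self]
  induction n with
  | zero => simp
  | succ n ih =>
    rw [pow_succ, ih]
    simp only [add_mul, mul_add, smul_mul_smul_comm, hE.eq, hE', hE'', hE.one_sub.eq, smul_zero,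
      add_zero, zero_add, pow_succ]

theorem one_add_pow_of_mul_self_eq_zero [Semiring A] {N : A} (hN : N * N = 0) (n : ℕ) :
    (1 + N) ^ n = 1 + n • N := by
  induction n with
  | zero => simp
  | succ n ih =>
    simp only [pow_succ, ih, add_mul, mul_add, one_mul, mul_one, smul_mul_assoc, hN, smul_zero,
      add_zero, succ_nsmul]
    abel

theorem commute_smul_add_smul_one [Ring A] [Algebra R A] (C : A) (α β : R) :
    Commute (α • C + β • 1) C :=
  ((Commute.refl C).smul_left α).add_left ((Commute.one_left C).smul_left β)

end PowerFormulas

namespace Matrix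

section TwoByTwo

variable {R : Type*} [CommRing R]

theorem mul_self_fin_two (C : Matrix (Fin 2) (Fin 2) R) :
    C * C = C.trace • C - C.det • 1 := by
  ext i j
  fin_cases i <;> fin_cases j <;>
    simp [mul_apply, Fin.sum_univ_two, trace_fin_two, det_fin_two] <;> ring

theorem sub_smul_one_mul_sub_smul_one_eq_zero (C : Matrix (Fin 2) (Fin 2) R) {l l' : R}
    (hsum : l + l' = C.trace) (hprod : l * l' = C.det) :
    (C - l • 1) * (C - l' • 1) = 0 := by
  have hCH := mul_self_fin_two C
  rw [← hsum, ← hprod] at hCH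
  simp only [sub_mul, mul_sub, smul_mul_assoc, mul_smul_comm, one_mul, mul_one, hCH]
  module

theorem det_smul_add_smul_one (C : Matrix (Fin 2) (Fin 2) R) {l l' : R}
    (hsum : l + l' = C.trace) (hprod : l * l' = C.det) (α β : R) :
    (α • C + β • 1).det = (α * l + β) * (α * l' + β) := by
  simp only [det_fin_two, trace_fin_two] at hsum hprod ⊢
  simp
  linear_combination (-α ^ 2) * hprod - α * β * hsum

end TwoByTwo

section Roots

variable {K : Type*} [Field K]

theorem exists_commute_det_eq_one_pow_eq_of_ne [IsAlgClosed K] (C : Matrix (Fin 2) (Fin 2) K)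
    (hC : C.det = 1) {l l' : K} (hsum : l + l' = C.trace) (hprod : l * l' = C.det) (hne : l ≠ l')
    {n : ℕ} (hn : n ≠ 0) :
    ∃ D : Matrix (Fin 2) (Fin 2) K, Commute D C ∧ D.det = 1 ∧ D ^ n = C := by
  have hll : l * l' = 1 := hprod.trans hC
  have hg : l - l' ≠ 0 := sub_ne_zero.mpr hne
  obtain ⟨μ, hμ⟩ := IsAlgClosed.exists_pow_nat_eq l (Nat.pos_of_ne_zero hn)
  have hμ0 : μ ≠ 0 := by
    rintro rfl
    rw [zero_pow hn] at hμ
    simp [← hμ] at hll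
  have hμ' : μ⁻¹ ^ n = l' := by rw [inv_pow, hμ]; exact inv_eq_of_mul_eq_one_right hll
  set E := (l - l')⁻¹ • (C - l' • 1) with hE
  have hEE : IsIdempotentElem E := by
    have hsq : (C - l' • 1) * (C - l' • 1) = (l - l') • (C - l' • 1) := by
      calc (C - l' • 1) * (C - l' • 1) = (C - l' • 1) * (C - l • 1 + (l - l') • 1) := by
            congr 1; module
        _ = (l - l') • (C - l' • 1) := by
          rw [mul_add, sub_smul_one_mul_sub_smul_one_eq_zero C (by rw [add_comm, hsum])
            (by rw [mul_comm, hprod]), zero_add, mul_smul_comm, mul_one]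
    rw [IsIdempotentElem, hE, smul_mul_smul_comm, hsq, smul_smul, mul_assoc,
      inv_mul_cancel₀ hg, mul_one]
  have hCE : C = l • E + l' • (1 - E) := by
    calc C = ((l - l') * (l - l')⁻¹) • (C - l' • 1) + l' • 1 := by
          rw [mul_inv_cancel₀ hg]; module
      _ = l • E + l' • (1 - E) := by rw [hE]; module
  set α := (μ - μ⁻¹) * (l - l')⁻¹ with hα
  have hD : μ • E + μ⁻¹ • (1 - E) = α • C + (μ⁻¹ - α * l') • 1 := by
    rw [hE]; module
  refine ⟨μ • E + μ⁻¹ • (1 - E), hD ▸ commute_smul_add_smul_one C _ _, ?_, ?_⟩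
  · rw [hD, det_smul_add_smul_one C hsum hprod]
    have hμl : α * l + (μ⁻¹ - α * l') = μ := by rw [hα]; field_simp; ring
    rw [hμl, show α * l' + (μ⁻¹ - α * l') = μ⁻¹ by ring, mul_inv_cancel₀ hμ0]
  · rw [hEE.smul_add_smul_one_sub_pow, hμ, hμ', ← hCE]

theorem exists_commute_det_eq_one_pow_eq_smul_of_eq [CharZero K] (C : Matrix (Fin 2) (Fin 2) K)
    (hC : C.det = 1) {l : K} (hsum : l + l = C.trace) (hprod : l * l = C.det) {n : ℕ}
    (hn : n ≠ 0) :
    ∃ D : Matrix (Fin 2) (Fin 2) K, Commute D C ∧ D.det = 1 ∧ D ^ n = l • C := by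
  have hll : l * l = 1 := hprod.trans hC
  have hN : (l • C - 1) * (l • C - 1) = 0 := by
    have h : l • C - 1 = l • (C - l • 1) := by rw [smul_sub, smul_smul, hll, one_smul]
    rw [h, smul_mul_smul_comm, sub_smul_one_mul_sub_smul_one_eq_zero C hsum hprod, smul_zero]
  set u : K := (n : K)⁻¹
  have hnu : (n : K) * u = 1 := mul_inv_cancel₀ (Nat.cast_ne_zero.mpr hn)
  refine ⟨(u * l) • C + (1 - u) • 1, commute_smul_add_smul_one C _ _, ?_, ?_⟩
  · rw [det_smul_add_smul_one C hsum hprod]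
    linear_combination (u ^ 2 * (l * l - 1) + 2 * u) * hll
  · have h : (u * l) • C + (1 - u) • 1 = 1 + u • (l • C - 1) := by module
    rw [h, one_add_pow_of_mul_self_eq_zero (by rw [smul_mul_smul_comm, hN, smul_zero]),
      ← Nat.cast_smul_eq_nsmul K, smul_smul, hnu, one_smul, add_sub_cancel]

theorem exists_commute_det_eq_one_pow_eq_or_neg [IsAlgClosed K] [CharZero K]
    (C : Matrix (Fin 2) (Fin 2) K) (hC : C.det = 1) {n : ℕ} (hn : n ≠ 0) :
    ∃ D : Matrix (Fin 2) (Fin 2) K, Commute D C ∧ D.det = 1 ∧ (D ^ n = C ∨ D ^ n = -C) := by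
  obtain ⟨s, hs⟩ := IsAlgClosed.exists_eq_mul_self (C.trace ^ 2 - 4)
  obtain ⟨l, l', hsum, hprod⟩ : ∃ l l' : K, l + l' = C.trace ∧ l * l' = C.det :=
    ⟨(C.trace + s) / 2, (C.trace - s) / 2, by ring, by rw [hC]; linear_combination (1 / 4) * hs⟩
  rcases eq_or_ne l l' with rfl | hne
  · obtain ⟨D, hDC, hdet, hpow⟩ :=
      exists_commute_det_eq_one_pow_eq_smul_of_eq C hC hsum hprod hn
    rcases mul_self_eq_one_iff.mp (hprod.trans hC) with rfl | rfl
    · exact ⟨D, hDC, hdet, Or.inl (hpow.trans (one_smul K C))⟩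
    · exact ⟨D, hDC, hdet, Or.inr (hpow.trans (neg_one_smul K C))⟩
  · obtain ⟨D, hDC, hdet, hpow⟩ :=
      exists_commute_det_eq_one_pow_eq_of_ne C hC hsum hprod hne hn
    exact ⟨D, hDC, hdet, Or.inl hpow⟩

end Roots

end Matrix

namespace Matrix.SpecialLinearGroup

variable {K : Type*} [Field K] [IsAlgClosed K] [CharZero K]

/-- The sign is unavoidable: `-(1 + N)` with `N ≠ 0`, `N ^ 2 = 0` has no square root in
`SL(2)`. -/
theorem exists_commute_pow_eq_or_even_and_pow_eq_neg (C : SpecialLinearGroup (Fin 2) K) {n : ℕ}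
    (hn : n ≠ 0) :
    ∃ D : SpecialLinearGroup (Fin 2) K,
      Commute D C ∧ (D ^ n = C ∨ (Even n ∧ D ^ n = -C)) := by
  obtain ⟨D, hDC, hdet, hpow⟩ :=
    exists_commute_det_eq_one_pow_eq_or_neg (C : Matrix _ _ K) C.det_coe hn
  set D' : SpecialLinearGroup (Fin 2) K := ⟨D, hdet⟩
  have hDC' : Commute D' C := Subtype.ext hDC.eq
  rcases hpow with h | h
  · exact ⟨D', hDC', Or.inl (Subtype.ext h)⟩
  have h' : D' ^ n = -C := Subtype.ext (by rw [coe_neg]; exact h)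
  rcases n.even_or_odd with he | ho
  · exact ⟨D', hDC', Or.inr ⟨he, h'⟩⟩
  · exact ⟨-D', hDC'.neg_left, Or.inl (by rw [ho.neg_pow, h', neg_neg])⟩

end Matrix.SpecialLinearGroup

section GroupPowers

variable {G : Type*} [Group G]

theorem Commute.exists_zpow_eq_of_isCoprime {A B : G} (hAB : Commute A B) {p q : ℤ}
    (hpq : IsCoprime p q) (h : A ^ p * B ^ q = 1) : ∃ C : G, A = C ^ q ∧ B = C ^ (-p) := by
  obtain ⟨a, b, hab⟩ := hpq
  have hBq : B ^ q = A ^ (-p) := by rw [zpow_neg]; exact (inv_eq_of_mul_eq_one_right h).symm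
  refine ⟨A ^ b * B ^ (-a), ?_, ?_⟩
  · rw [(hAB.zpow_zpow b (-a)).mul_zpow, ← zpow_mul, ← zpow_mul, mul_comm (-a), zpow_mul B,
      hBq, ← zpow_mul, ← zpow_add, show b * q + -p * -a = 1 by linear_combination hab, zpow_one]
  · rw [(hAB.zpow_zpow b (-a)).mul_zpow, ← zpow_mul A, ← zpow_mul B,
      show -a * -p = 1 + q * -b by linear_combination hab, zpow_add, zpow_one, zpow_mul B q, hBq,
      ← zpow_mul, ← mul_assoc, (hAB.zpow_left _).eq, mul_assoc, ← zpow_add,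
      show b * -p + -p * -b = 0 by ring, zpow_zero, mul_one]

variable [HasDistribNeg G] {C D : G} {w : ℕ}

theorem zpow_natCast_mul_eq_or_neg (hD : D ^ w = C ∨ D ^ w = -C) (k : ℤ) :
    D ^ ((w : ℤ) * k) = C ^ k ∨ D ^ ((w : ℤ) * k) = -C ^ k := by
  rw [zpow_mul, zpow_natCast]
  rcases hD with h | h
  · exact Or.inl (by rw [h])
  · rw [h]
    rcases k.even_or_odd with hk | hk
    · exact Or.inl (hk.neg_zpow _)
    · exact Or.inr (hk.neg_zpow _)

theorem zpow_natCast_mul_eq_of_dvd (hD : D ^ w = C ∨ (Even w ∧ D ^ w = -C)) {m : ℤ}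
    (hm : (w : ℤ) ∣ m) : D ^ ((w : ℤ) * m) = C ^ m := by
  rw [zpow_mul, zpow_natCast]
  rcases hD with h | ⟨hw, h⟩
  · rw [h]
  · rw [h]
    exact (((Int.even_coe_nat w).mpr hw).trans_dvd hm).neg_zpow _

end GroupPowers

theorem stmt_16_general (p q : ℤ) (hcop : IsCoprime p q)
    (w : ℤ) (hw : 0 < w) (d : ℤ) (hd : d = Int.gcd q (w ^ 2))
    (A B : Matrix.SpecialLinearGroup (Fin 2) ℂ)
    (hAB : A * B = B * A)
    (hpq : A ^ p * B ^ q = 1) :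
    ∃ M : Matrix.SpecialLinearGroup (Fin 2) ℂ,
      M * B = B * M ∧
      (M ^ w = A ∨
        ((M ^ w : Matrix.SpecialLinearGroup (Fin 2) ℂ) : Matrix (Fin 2) (Fin 2) ℂ)
          = -(A : Matrix (Fin 2) (Fin 2) ℂ)) ∧
      M ^ (p * w ^ 2 / d) * B ^ (w * q / d) = 1 := by
  obtain ⟨C, rfl, rfl⟩ := Commute.exists_zpow_eq_of_isCoprime hAB hcop hpq
  lift w to ℕ using hw.le
  obtain ⟨D, hDC, hD⟩ :=
    Matrix.SpecialLinearGroup.exists_commute_pow_eq_or_even_and_pow_eq_neg C (n := w) (by omega)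
  have hd0 : d ≠ 0 := by
    rw [hd, Int.natCast_ne_zero, Ne, Int.gcd_eq_zero_iff, not_and]
    exact fun _ => pow_ne_zero 2 hw.ne'
  obtain ⟨q', hq'⟩ : d ∣ q := hd ▸ Int.gcd_dvd_left q _
  obtain ⟨v, hv⟩ : d ∣ (w : ℤ) ^ 2 := hd ▸ Int.gcd_dvd_right q _
  have he : p * w ^ 2 / d = p * v := by rw [hv, mul_left_comm, Int.mul_ediv_cancel_left _ hd0]
  have hf : w * q / d = w * q' := by rw [hq', mul_left_comm, Int.mul_ediv_cancel_left _ hd0]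
  refine ⟨D ^ q, (hDC.zpow_zpow q (-p)).eq, ?_, ?_⟩
  · rw [← zpow_mul, mul_comm]
    refine (zpow_natCast_mul_eq_or_neg (hD.imp_right And.right) q).imp id fun h => ?_
    rw [h, Matrix.SpecialLinearGroup.coe_neg]
  · rw [he, hf, ← zpow_mul,
      show q * (p * v) = w * (p * w * q') by linear_combination p * v * hq' - p * q' * hv,
      zpow_natCast_mul_eq_of_dvd hD ⟨p * q', by ring⟩, ← zpow_mul, ← zpow_add,
      show p * w * q' + -p * (w * q') = 0 by ring, zpow_zero]

/-- Matrix-theoretic core of Lemma 5.3: if `A, B ∈ SL(2,ℂ)` commute, `A ≠ ±I`, and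
`A^p·B^q = I` with `p, q` coprime, `q > 0`, `w > 0`, `d = gcd(q, w²)`, then there is
`M ∈ SL(2,ℂ)` commuting with `B` such that `M^w = A` or `M^w = −A`, and
`M^{p·w²/d}·B^{w·q/d} = I`. -/
theorem stmt_16 (p q : ℤ) (hq : 0 < q) (hcop : IsCoprime p q)
    (w : ℤ) (hw : 0 < w) (d : ℤ) (hd : d = Int.gcd q (w ^ 2))
    (A B : Matrix.SpecialLinearGroup (Fin 2) ℂ)
    (hAB : A * B = B * A) (hA1 : A ≠ 1)
    (hA2 : (A : Matrix (Fin 2) (Fin 2) ℂ) ≠ -1)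
    (hpq : A ^ p * B ^ q = 1) :
    ∃ M : Matrix.SpecialLinearGroup (Fin 2) ℂ,
      M * B = B * M ∧
      (M ^ w = A ∨
        ((M ^ w : Matrix.SpecialLinearGroup (Fin 2) ℂ) : Matrix (Fin 2) (Fin 2) ℂ)
          = -(A : Matrix (Fin 2) (Fin 2) ℂ)) ∧
      M ^ (p * w ^ 2 / d) * B ^ (w * q / d) = 1 :=
  stmt_16_general p q hcop w hw d hd A B hAB hpq
end
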